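/- arXiv:2511.01309 — 3 statements merged into one kernel-verified Lean document; each statement's English description precedes it below -/
import Mathlib

section
/- Let m ≥ 1, Tr the absolute trace of 𝔽_{2^m} over 𝔽_2, d a positive integer, and let Υ₁ = { r² + r : r ∈ 𝔽_{2^m}^* } \ {0}. Define S₄(a,b) = Σ_{x ∈ 𝔽_{2^m}^*} Σ_{y ∈ 𝔽_{2^m}^*} (−1)^{Tr(x^{d+2} y + x^{d+1} y) + Tr(a x^d y + b x)}. Then: (i) if a = 0 and b ≠ 0, S₄ = 2^m + 1 when Tr(b) = 0 and S₄ = −2^m + 1 when Tr(b) = 1; (ii) if a ∈ Υ₁ and b = 0, S₄ = 2^m + 1; (iii) if a ≠ 0, a ∉ Υ₁ and b = 0, S₄ = −2^m + 1; (iv) if a ≠ 0, a ∉ Υ₁ and b ≠ 0, S₄ = 1; (v) if a ∈ Υ₁, b ≠ 0 and Tr(b) = 1, S₄ = 1; (vi) if a ∈ Υ₁, b ≠ 0 and Tr(b) = 0, then S₄ = 2^{m+1} + 1 or S₄ = −2^{m+1} + 1. -/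
/-!
With `χ = (-1)^Tr` the summand of `S₄` is `χ(x^d (x² + x + a) y) · χ(b x)`, so for fixed `x ≠ 0`
the sum over `y ≠ 0` is `q - 1` if `x² + x + a = 0` and `-1` otherwise (`q = 2^m`). Hence
`S₄ = q · Σ χ(b x) - Σ_{x ≠ 0} χ(b x)`, the first sum running over the nonzero roots of
`x² + x + a`. In characteristic 2, `x² + x + r² + r = (x + r)(x + r + 1)`, so these roots are
`{1}` for `a = 0`, `{r, r + 1}` for `a = r² + r ∈ Υ₁`, and there are none otherwise.
-/

open Finset
open scoped Classical

variable {F : Type*} [Field F] [Fintype F] [Algebra (ZMod 2) F]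

noncomputable def Tr (z : F) : ZMod 2 := Algebra.trace (ZMod 2) F z

noncomputable def chi (z : F) : ℤ := (-1) ^ (Tr z).val

/-- membership in Υ₁ = { r² + r : r ∈ F* } \ {0}. -/
def Ups1 (a : F) : Prop := a ≠ 0 ∧ ∃ r : F, r ≠ 0 ∧ a = r ^ 2 + r

noncomputable def S4 (d : ℕ) (a b : F) : ℤ :=
  ∑ x ∈ univ.filter (fun x : F => x ≠ 0), ∑ y ∈ univ.filter (fun y : F => y ≠ 0),
    chi (x ^ (d + 2) * y + x ^ (d + 1) * y) * chi (a * x ^ d * y + b * x)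

section Character

variable {K : Type*} [Field K] [Algebra (ZMod 2) K]

lemma chi_eq_one_of_Tr_eq_zero {z : K} (h : Tr z = 0) : chi z = 1 := by
  rw [chi, h, ZMod.val_zero, pow_zero]

lemma chi_eq_neg_one_of_Tr_eq_one {z : K} (h : Tr z = 1) : chi z = -1 := by
  rw [chi, h, ZMod.val_one, pow_one]

lemma chi_zero : chi (0 : K) = 1 := chi_eq_one_of_Tr_eq_zero (map_zero _)

lemma chi_eq_one_or_neg_one (z : K) : chi z = 1 ∨ chi z = -1 := by
  obtain h | h : Tr z = 0 ∨ Tr z = 1 := by generalize Tr z = s; revert s; decide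
  · exact .inl (chi_eq_one_of_Tr_eq_zero h)
  · exact .inr (chi_eq_neg_one_of_Tr_eq_one h)

lemma chi_add (u v : K) : chi (u + v) = chi u * chi v := by
  simp only [chi, Tr, map_add]
  generalize Algebra.trace (ZMod 2) K u = s
  generalize Algebra.trace (ZMod 2) K v = t
  revert s t
  decide

noncomputable def chiAddChar : AddChar K ℤ where
  toFun := chi
  map_zero_eq_one' := chi_zero
  map_add_eq_mul' := chi_add

@[simp] lemma chiAddChar_apply (z : K) : chiAddChar z = chi z := rfl

lemma exists_Tr_eq_one [Finite K] : ∃ t : K, Tr t = 1 := by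
  have : FiniteDimensional (ZMod 2) K := Module.Finite.of_finite
  exact Algebra.trace_surjective (ZMod 2) K 1

lemma chiAddChar_isPrimitive [Finite K] : (chiAddChar : AddChar K ℤ).IsPrimitive := by
  refine AddChar.IsPrimitive.of_ne_one fun h => ?_
  obtain ⟨t, ht⟩ := exists_Tr_eq_one (K := K)
  have := DFunLike.congr_fun h t
  simp [chi_eq_neg_one_of_Tr_eq_one ht] at this

lemma sum_ne_zero_chi_mul [Fintype K] (c : K) :
    ∑ y ∈ univ.filter (fun y : K => y ≠ 0), chi (c * y)
      = if c = 0 then (Fintype.card K : ℤ) - 1 else -1 := by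
  have hsum : ∑ y, chi (c * y) = if c = 0 then (Fintype.card K : ℤ) else 0 := by
    simpa [mul_comm, apply_ite] using AddChar.sum_mulShift c (chiAddChar_isPrimitive (K := K))
  rw [filter_ne', sum_erase_eq_sub (mem_univ 0), hsum, mul_zero, chi_zero]
  split_ifs <;> ring

lemma charP_two_of_zmod_algebra : CharP K 2 :=
  charP_of_injective_algebraMap (algebraMap (ZMod 2) K).injective 2

end Character

section ArtinSchreier

variable {K : Type*} [Field K] [CharP K 2]

lemma sq_add_self_add_sq_add_self_eq_zero_iff {x r : K} :
    x ^ 2 + x + (r ^ 2 + r) = 0 ↔ x = r ∨ x = r + 1 := by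
  have hfactor : x ^ 2 + x + (r ^ 2 + r) = (x + r) * (x + r + 1) := by
    linear_combination (-(x * r)) * CharTwo.two_eq_zero (R := K)
  rw [hfactor, mul_eq_zero, CharTwo.add_eq_zero, add_assoc, CharTwo.add_eq_zero]

lemma exists_sq_add_self_of_Ups1 {a : K} (h : Ups1 a) :
    ∃ r : K, r ≠ 0 ∧ r + 1 ≠ 0 ∧ a = r ^ 2 + r := by
  obtain ⟨ha, r, hr, rfl⟩ := h
  refine ⟨r, hr, fun hr1 => ha ?_, rfl⟩
  rw [CharTwo.add_eq_zero.mp hr1, one_pow]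
  exact CharTwo.add_self_eq_zero 1

variable [Fintype K]

noncomputable def nonzeroArtinSchreierRoots (a : K) : Finset K :=
  univ.filter fun x => x ≠ 0 ∧ x ^ 2 + x + a = 0

lemma nonzeroArtinSchreierRoots_sq_add_self (r : K) :
    nonzeroArtinSchreierRoots (r ^ 2 + r) = ({r, r + 1} : Finset K).filter (· ≠ 0) := by
  ext x
  simp only [nonzeroArtinSchreierRoots, sq_add_self_add_sq_add_self_eq_zero_iff, mem_filter,
    mem_univ, true_and, mem_insert, mem_singleton]
  tauto

lemma nonzeroArtinSchreierRoots_zero : nonzeroArtinSchreierRoots (0 : K) = {1} := by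
  simpa [filter_insert, filter_singleton] using nonzeroArtinSchreierRoots_sq_add_self (0 : K)

lemma nonzeroArtinSchreierRoots_eq_pair {r : K} (hr : r ≠ 0) (hr1 : r + 1 ≠ 0) :
    nonzeroArtinSchreierRoots (r ^ 2 + r) = {r, r + 1} := by
  rw [nonzeroArtinSchreierRoots_sq_add_self, filter_true_of_mem]
  simp [hr, hr1]

lemma nonzeroArtinSchreierRoots_eq_empty {a : K} (ha : a ≠ 0) (h : ¬ Ups1 a) :
    nonzeroArtinSchreierRoots a = ∅ := by
  refine filter_false_of_mem fun x _ ⟨hx, hroot⟩ => h ⟨ha, x, hx, ?_⟩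
  exact (CharTwo.add_eq_zero.mp hroot).symm

end ArtinSchreier

attribute [local instance] charP_two_of_zmod_algebra

lemma sum_ne_zero_S4_summand (d : ℕ) (a b : F) {x : F} (hx : x ≠ 0) :
    ∑ y ∈ univ.filter (fun y : F => y ≠ 0),
        chi (x ^ (d + 2) * y + x ^ (d + 1) * y) * chi (a * x ^ d * y + b * x)
      = chi (b * x) * (if x ^ 2 + x + a = 0 then (Fintype.card F : ℤ) - 1 else -1) := by
  have hsummand : ∀ y : F,
      chi (x ^ (d + 2) * y + x ^ (d + 1) * y) * chi (a * x ^ d * y + b * x)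
        = chi (b * x) * chi (x ^ d * (x ^ 2 + x + a) * y) := by
    intro y
    rw [← chi_add, ← chi_add, mul_comm]
    ring_nf
  simp only [hsummand, ← mul_sum, sum_ne_zero_chi_mul, mul_eq_zero, pow_eq_zero_iff', hx,
    false_and, false_or]

lemma S4_eq (d : ℕ) (a b : F) :
    S4 d a b = Fintype.card F * ∑ x ∈ nonzeroArtinSchreierRoots a, chi (b * x)
      - ∑ x ∈ univ.filter (fun x : F => x ≠ 0), chi (b * x) := by
  rw [S4, sum_congr rfl fun x hx => sum_ne_zero_S4_summand d a b (mem_filter.mp hx).2,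
    nonzeroArtinSchreierRoots, ← filter_filter, mul_sum,
    sum_filter (s := univ.filter fun x : F => x ≠ 0), ← sum_sub_distrib]
  refine sum_congr rfl fun x _ => ?_
  split_ifs <;> ring

lemma S4_zero_left (d : ℕ) {b : F} (hb : b ≠ 0) : S4 d 0 b = Fintype.card F * chi b + 1 := by
  rw [S4_eq, nonzeroArtinSchreierRoots_zero, sum_singleton, mul_one, sum_ne_zero_chi_mul,
    if_neg hb]
  ring

lemma S4_sq_add_self (d : ℕ) {r : F} (hr : r ≠ 0) (hr1 : r + 1 ≠ 0) (b : F) :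
    S4 d (r ^ 2 + r) b = Fintype.card F * (chi (b * r) * (1 + chi b))
      - ∑ x ∈ univ.filter (fun x : F => x ≠ 0), chi (b * x) := by
  have hne : r ≠ r + 1 := fun h => one_ne_zero (left_eq_add.mp h)
  rw [S4_eq, nonzeroArtinSchreierRoots_eq_pair hr hr1, sum_pair hne, mul_add_one, chi_add]
  ring

lemma S4_of_not_Ups1 (d : ℕ) {a : F} (ha : a ≠ 0) (h : ¬ Ups1 a) (b : F) :
    S4 d a b = -∑ x ∈ univ.filter (fun x : F => x ≠ 0), chi (b * x) := by
  rw [S4_eq, nonzeroArtinSchreierRoots_eq_empty ha h, sum_empty]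
  ring

theorem stmt5_general (m d : ℕ) (hF : Fintype.card F = 2 ^ m)
    (a b : F) :
    (a = 0 → b ≠ 0 →
      ((Tr b = 0 → S4 d a b = (2 ^ m : ℤ) + 1) ∧
       (Tr b = 1 → S4 d a b = -(2 ^ m : ℤ) + 1))) ∧
    (Ups1 a → b = 0 → S4 d a b = (2 ^ m : ℤ) + 1) ∧
    (a ≠ 0 → ¬ Ups1 a → b = 0 → S4 d a b = -(2 ^ m : ℤ) + 1) ∧
    (a ≠ 0 → ¬ Ups1 a → b ≠ 0 → S4 d a b = 1) ∧
    (Ups1 a → b ≠ 0 → Tr b = 1 → S4 d a b = 1) ∧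
    (Ups1 a → b ≠ 0 → Tr b = 0 →
      S4 d a b = (2 ^ (m + 1) : ℤ) + 1 ∨ S4 d a b = -(2 ^ (m + 1) : ℤ) + 1) := by
  have hq : (Fintype.card F : ℤ) = 2 ^ m := by exact_mod_cast hF
  refine ⟨fun ha hb => ?_, fun ha hb => ?_, fun ha hna hb => ?_, fun ha hna hb => ?_,
    fun ha hb htr => ?_, fun ha hb htr => ?_⟩
  · subst ha
    rw [S4_zero_left d hb, hq]
    exact ⟨fun htr => by rw [chi_eq_one_of_Tr_eq_zero htr]; ring,
      fun htr => by rw [chi_eq_neg_one_of_Tr_eq_one htr]; ring⟩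
  · obtain ⟨r, hr, hr1, rfl⟩ := exists_sq_add_self_of_Ups1 ha
    rw [S4_sq_add_self d hr hr1, hb, sum_ne_zero_chi_mul, if_pos rfl, zero_mul, chi_zero, hq]
    ring
  · rw [S4_of_not_Ups1 d ha hna, hb, sum_ne_zero_chi_mul, if_pos rfl, hq]
    ring
  · rw [S4_of_not_Ups1 d ha hna, sum_ne_zero_chi_mul, if_neg hb]
    ring
  · obtain ⟨r, hr, hr1, rfl⟩ := exists_sq_add_self_of_Ups1 ha
    rw [S4_sq_add_self d hr hr1, sum_ne_zero_chi_mul, if_neg hb, chi_eq_neg_one_of_Tr_eq_one htr]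
    ring
  · obtain ⟨r, hr, hr1, rfl⟩ := exists_sq_add_self_of_Ups1 ha
    rw [S4_sq_add_self d hr hr1, sum_ne_zero_chi_mul, if_neg hb, chi_eq_one_of_Tr_eq_zero htr, hq,
      pow_succ]
    rcases chi_eq_one_or_neg_one (b * r) with h | h <;> rw [h]
    · left; ring
    · right; ring

theorem stmt5 (m d : ℕ) (hm : 1 ≤ m) (hd : 1 ≤ d) (hF : Fintype.card F = 2 ^ m)
    (a b : F) :
    (a = 0 → b ≠ 0 →
      ((Tr b = 0 → S4 d a b = (2 ^ m : ℤ) + 1) ∧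
       (Tr b = 1 → S4 d a b = -(2 ^ m : ℤ) + 1))) ∧
    (Ups1 a → b = 0 → S4 d a b = (2 ^ m : ℤ) + 1) ∧
    (a ≠ 0 → ¬ Ups1 a → b = 0 → S4 d a b = -(2 ^ m : ℤ) + 1) ∧
    (a ≠ 0 → ¬ Ups1 a → b ≠ 0 → S4 d a b = 1) ∧
    (Ups1 a → b ≠ 0 → Tr b = 1 → S4 d a b = 1) ∧
    (Ups1 a → b ≠ 0 → Tr b = 0 →
      S4 d a b = (2 ^ (m + 1) : ℤ) + 1 ∨ S4 d a b = -(2 ^ (m + 1) : ℤ) + 1) :=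
  stmt5_general m d hF a b
end

section
/- Let m ≥ 4 and d a positive integer. The binary linear code C_{D₂} = { (Tr(a x^d y + b x))_{(x,y) ∈ D₂} : a, b ∈ 𝔽_{2^m} }, with D₂ = { (x,y) ∈ 𝔽_{2^m}^* × 𝔽_{2^m}^* : Tr(x^{d+2} y + x^{d+1} y) = 0 }, is a [2^{2m−1} − 2^m + 1, 2m, 2^m(2^{m−2} − 1)] three-weight code with weight distribution: weight 2^m(2^{m−2} − 1) with frequency 2^{m−2}(2^{m−1} − 3) + 1; weight 2^{m−1}(2^{m−1} − 1) with frequency 3·2^{2m−2} − 2; weight 2^{2m−2} with frequency 2^{m−2}(2^{m−1} + 3). -/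
open Finset
open scoped Classical

variable {F : Type*} [Field F] [Fintype F] [Algebra (ZMod 2) F]

noncomputable def D2 (F : Type*) [Field F] [Fintype F] [Algebra (ZMod 2) F] (d : ℕ) :
    Finset (F × F) :=
  univ.filter fun q => q.1 ≠ 0 ∧ q.2 ≠ 0 ∧
    Tr (q.1 ^ (d + 2) * q.2 + q.1 ^ (d + 1) * q.2) = 0

noncomputable def wt2 (d : ℕ) (a b : F) : ℕ :=
  ((D2 F d).filter fun q => Tr (a * q.1 ^ d * q.2 + b * q.1) = 1).card


/-!
Write `|F| = 4q`. For `x ≠ 0` the points of `D2` in the column `{x} × F`, together with `(x, 0)`,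
form the hyperplane `Tr (x^d (x^2 + x) y) = 0`, and on it the codeword is
`y ↦ Tr (a x^d y) + Tr (b x)`. Two `𝔽₂`-independent linear forms cut `F` into four classes of
`q` elements, so a column contributes `q` to the weight unless `a = 0`, `x = 1` or
`x^2 + x = a`, where the two forms are dependent. Hence the weight of `c(a, b)` depends only on
whether `a = 0`, `Tr a = 1`, or `a = r^2 + r` (additive Hilbert 90), and in the last case on
`Tr b` and `Tr (r b)`; counting the pairs `(a, b)` of each kind gives the three weights and their
frequencies.
-/

instance {K : Type*} [Field K] [Algebra (ZMod 2) K] : CharP K 2 :=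
  charP_of_injective_algebraMap (algebraMap (ZMod 2) K).injective 2

lemma ZMod.two_eq_zero_or_eq_one (s : ZMod 2) : s = 0 ∨ s = 1 := by
  revert s; decide

lemma card_filter_add_card_filter_zmod_two {α : Type*} (s : Finset α) (g : α → ZMod 2) :
    #{y ∈ s | g y = 0} + #{y ∈ s | g y = 1} = #s := by
  rw [← card_union_of_disjoint (disjoint_filter.2 fun y _ h₀ h₁ => zero_ne_one (h₀.symm.trans h₁))]
  congr 1; ext y; rcases ZMod.two_eq_zero_or_eq_one (g y) with h | h <;> simp [h]

lemma card_filter_ne_add_ite {α : Type*} [Fintype α] (P : α → Prop) [DecidablePred P] (a : α) :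
    #{y | y ≠ a ∧ P y} + (if P a then 1 else 0) = #{y | P y} := by
  rw [← filter_filter, filter_ne', filter_erase]
  split_ifs with h
  · exact card_erase_add_one (by simpa using h)
  · rw [erase_eq_of_notMem (by simpa using h), add_zero]

lemma sum_ite_const {α : Type*} [Fintype α] (P : α → Prop) [DecidablePred P] (c : ℕ) :
    ∑ x, (if P x then c else 0) = c * #{x | P x} := by
  rw [sum_ite, sum_const_zero, sum_const, smul_eq_mul, add_zero, mul_comm]

lemma card_filter_prod_eq_sum {α β : Type*} [Fintype α] [Fintype β] (P : α × β → Prop)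
    [DecidablePred P] : #{p | P p} = ∑ a, #{b | P (a, b)} := by
  simp only [card_filter, Fintype.sum_prod_type]

section CharTwo

variable {K : Type*} [Field K] [CharP K 2]

lemma sq_add_self_eq_sq_add_self_iff (x r : K) : x ^ 2 + x = r ^ 2 + r ↔ x = r ∨ x = r + 1 := by
  have h2 : (2 : K) = 0 := CharTwo.two_eq_zero
  constructor
  · intro h
    have : (x + r) * (x + r + 1) = 0 := by linear_combination h + (x * r + r ^ 2 + r) * h2
    rcases mul_eq_zero.mp this with h0 | h0
    · left; linear_combination h0 - r * h2
    · right; linear_combination h0 - (r + 1) * h2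
  · rintro (rfl | rfl)
    · rfl
    · linear_combination (r + 1) * h2

lemma sq_add_self_eq_zero_iff (x : K) : x ^ 2 + x = 0 ↔ x = 0 ∨ x = 1 := by
  simpa using sq_add_self_eq_sq_add_self_iff x 0

lemma pow_mul_sq_add_self_ne_zero {x : K} (hx0 : x ≠ 0) (hx1 : x ≠ 1) (d : ℕ) :
    x ^ d * (x ^ 2 + x) ≠ 0 :=
  mul_ne_zero (pow_ne_zero d hx0) (by rw [Ne, sq_add_self_eq_zero_iff]; tauto)

end CharTwo

section Trace

@[simp]
lemma Tr_zero {K : Type*} [Field K] [Algebra (ZMod 2) K] : Tr (0 : K) = 0 := map_zero _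

lemma Tr_add {K : Type*} [Field K] [Algebra (ZMod 2) K] (x y : K) : Tr (x + y) = Tr x + Tr y :=
  map_add _ x y

lemma Tr_sq (x : F) : Tr (x ^ 2) = Tr x := by
  simpa [Tr, ZMod.card] using
    Algebra.trace_eq_of_algEquiv (FiniteField.frobeniusAlgEquivOfAlgebraic (ZMod 2) F) x

lemma Tr_sq_add_self (x : F) : Tr (x ^ 2 + x) = 0 := by
  rw [Tr_add, Tr_sq, CharTwo.add_self_eq_zero]

lemma card_Tr_mul_eq {c : F} (hc : c ≠ 0) (t : ZMod 2) :
    #{y | Tr (c * y) = t} * 2 = Fintype.card F := by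
  let f : F →+ ZMod 2 := (Algebra.trace (ZMod 2) F).toAddMonoidHom.comp (AddMonoidHom.mulLeft c)
  have hf : Function.Surjective f := fun s => by
    obtain ⟨z, hz⟩ := Algebra.trace_surjective (ZMod 2) F s
    exact ⟨c⁻¹ * z, by simp [f, hc, hz]⟩
  have h01 : #{y | Tr (c * y) = 0} = #{y | Tr (c * y) = 1} :=
    AddMonoidHom.card_fiber_eq_of_mem_range f (hf 0) (hf 1)
  have htot := card_filter_add_card_filter_zmod_two univ fun y => Tr (c * y)
  rw [card_univ] at htot
  rcases ZMod.two_eq_zero_or_eq_one t with rfl | rfl <;> omega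

lemma card_Tr_mul_eq_and_Tr_mul_eq {u v : F} (hu : u ≠ 0) (hv : v ≠ 0) (huv : u ≠ v)
    (s t : ZMod 2) : #{y | Tr (u * y) = s ∧ Tr (v * y) = t} * 4 = Fintype.card F := by
  set N : ZMod 2 → ZMod 2 → ℕ := fun s t => #{y | Tr (u * y) = s ∧ Tr (v * y) = t}
  have row (s : ZMod 2) : N s 0 + N s 1 = #{y | Tr (u * y) = s} := by
    simpa only [filter_filter] using
      card_filter_add_card_filter_zmod_two {y | Tr (u * y) = s} fun y => Tr (v * y)
  have col : N 0 0 + N 1 0 = #{y | Tr (v * y) = 0} := by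
    rw [← card_filter_add_card_filter_zmod_two {y | Tr (v * y) = 0} fun y => Tr (u * y)]
    simp only [filter_filter, N, and_comm]
  have diag : N 0 0 + N 1 1 = #{y | Tr ((u + v) * y) = 0} := by
    rw [← card_filter_add_card_filter_zmod_two {y | Tr ((u + v) * y) = 0} fun y => Tr (u * y)]
    simp only [filter_filter, N, add_mul, Tr_add]
    congr 2 <;> ext y <;> simp only [mem_filter, mem_univ, true_and] <;>
      generalize Tr (u * y) = a <;> generalize Tr (v * y) = b <;> revert a b <;> decide
  have hu₀ := card_Tr_mul_eq hu 0
  have hu₁ := card_Tr_mul_eq hu 1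
  have hv₀ := card_Tr_mul_eq hv 0
  have huv₀ := card_Tr_mul_eq (fun h => huv (CharTwo.add_eq_zero.mp h) : u + v ≠ 0) 0
  have row₀ := row 0
  have row₁ := row 1
  -- Rows, a column and the diagonal (the hyperplanes of `u`, `v`, `u + v`) all have `|F| / 2`
  -- elements, which forces the four counts to be equal.
  show N s t * 4 = _
  rcases ZMod.two_eq_zero_or_eq_one s with rfl | rfl <;>
    rcases ZMod.two_eq_zero_or_eq_one t with rfl | rfl <;> omega

lemma exists_sq_add_self_eq {a : F} (ha : Tr a = 0) : ∃ r, r ^ 2 + r = a := by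
  -- `x ↦ x ^ 2 + x` is two-to-one into the trace-zero hyperplane, hence onto it.
  set I := univ.image fun x : F => x ^ 2 + x
  have hI : I ⊆ ({z | Tr z = 0} : Finset F) := by
    simp [I, subset_iff, Tr_sq_add_self]
  have hfiber : ∀ z ∈ I, #{x | x ^ 2 + x = z} = 2 := by
    simp only [I, mem_image, mem_univ, true_and, forall_exists_index]
    rintro _ r rfl
    have : ({x | x ^ 2 + x = r ^ 2 + r} : Finset F) = {r, r + 1} := by
      ext x; simp [sq_add_self_eq_sq_add_self_iff]
    rw [this, card_pair (by simp)]
  have hcardI : #I * 2 = Fintype.card F := by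
    rw [← card_univ, card_eq_sum_card_image (fun x : F => x ^ 2 + x) univ, sum_congr rfl hfiber,
      sum_const, smul_eq_mul]
  have hker : #{z : F | Tr z = 0} * 2 = Fintype.card F := by
    simpa using card_Tr_mul_eq (one_ne_zero (α := F)) 0
  have : a ∈ I := eq_of_subset_of_card_le hI (by omega) ▸ by simpa using ha
  simpa [I] using this

end Trace

section Code

variable {q : ℕ} (d : ℕ)

lemma card_Tr_eq (hQ : Fintype.card F = 4 * q) (t : ZMod 2) : #{b : F | Tr b = t} = 2 * q := by
  have := card_Tr_mul_eq (one_ne_zero (α := F)) t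
  simp only [one_mul] at this
  omega

lemma card_Tr_mul_eq_one (hQ : Fintype.card F = 4 * q) (b : F) :
    #{x | Tr (b * x) = 1} = if b = 0 then 0 else 2 * q := by
  split_ifs with hb
  · simp [hb]
  · have := card_Tr_mul_eq hb 1
    omega

/-- The weight of the codeword `c(a, b)` on the column `{x} × F` of `D2`, with the point `(x, 0)`
added; that point adds `Tr (b x)`, whence the correction term in
`wt2_add_card_eq_sum_columnWeight`. -/
noncomputable def columnWeight (a b x : F) : ℕ :=
  #{y | x ≠ 0 ∧ Tr (x ^ (d + 2) * y + x ^ (d + 1) * y) = 0 ∧ Tr (a * x ^ d * y + b * x) = 1}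

@[simp]
lemma columnWeight_zero_right (a b : F) : columnWeight d a b 0 = 0 := by
  simp [columnWeight]

lemma wt2_add_card_eq_sum_columnWeight (a b : F) :
    wt2 d a b + #{x | Tr (b * x) = 1} = ∑ x, columnWeight d a b x := by
  have hwt : wt2 d a b = ∑ x, #{y | (x ≠ 0 ∧ y ≠ 0 ∧
      Tr (x ^ (d + 2) * y + x ^ (d + 1) * y) = 0) ∧ Tr (a * x ^ d * y + b * x) = 1} := by
    simp only [wt2, D2, filter_filter, card_filter, Fintype.sum_prod_type]
  rw [hwt, card_filter, ← sum_add_distrib]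
  refine sum_congr rfl fun x _ => ?_
  by_cases hx : x = 0
  · simp [hx]
  · convert card_filter_ne_add_ite
      (fun y => Tr (x ^ (d + 2) * y + x ^ (d + 1) * y) = 0 ∧ Tr (a * x ^ d * y + b * x) = 1) 0
      using 2 <;> simp [hx, columnWeight, and_assoc]

lemma columnWeight_eq {x : F} (hx : x ≠ 0) (a b : F) :
    columnWeight d a b x =
      #{y | Tr (x ^ d * (x ^ 2 + x) * y) = 0 ∧ Tr (a * x ^ d * y) = 1 + Tr (b * x)} := by
  have (s t : ZMod 2) : s + t = 1 ↔ s = 1 + t := by revert s t; decide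
  unfold columnWeight
  congr 1; ext y
  simp only [mem_filter, mem_univ, true_and, ne_eq, hx, not_false_eq_true]
  rw [show x ^ (d + 2) * y + x ^ (d + 1) * y = x ^ d * (x ^ 2 + x) * y by ring, Tr_add, this]

lemma columnWeight_one_of_ne_zero (hQ : Fintype.card F = 4 * q) {a : F} (ha : a ≠ 0) (b : F) :
    columnWeight d a b 1 = 2 * q := by
  have := card_Tr_mul_eq ha (1 + Tr b)
  simp [columnWeight_eq d one_ne_zero, CharTwo.add_self_eq_zero]
  omega

lemma columnWeight_zero_one (hQ : Fintype.card F = 4 * q) (b : F) :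
    columnWeight d 0 b 1 = if Tr b = 1 then 4 * q else 0 := by
  rw [columnWeight_eq d one_ne_zero, ← hQ]
  rcases ZMod.two_eq_zero_or_eq_one (Tr b) with h | h <;> simp [h, CharTwo.add_self_eq_zero]

lemma columnWeight_of_dependent (hQ : Fintype.card F = 4 * q) {a x : F} (hx0 : x ≠ 0)
    (hx1 : x ≠ 1) (hax : a = 0 ∨ a = x ^ 2 + x) (b : F) :
    columnWeight d a b x = if Tr (b * x) = 1 then 2 * q else 0 := by
  have hv (y : F) (hy : Tr (x ^ d * (x ^ 2 + x) * y) = 0) : Tr (a * x ^ d * y) = 0 := by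
    rcases hax with rfl | rfl
    · simp
    · rwa [mul_comm (x ^ 2 + x)]
  have hcol : columnWeight d a b x =
      #{y | Tr (x ^ d * (x ^ 2 + x) * y) = 0 ∧ Tr (b * x) = 1} := by
    have (t : ZMod 2) : 0 = 1 + t ↔ t = 1 := by revert t; decide
    rw [columnWeight_eq d hx0]
    congr 1; ext y
    simp only [mem_filter, mem_univ, true_and, and_congr_right_iff]
    intro hy
    rw [hv y hy, this]
  rw [hcol]
  split_ifs with h
  · have := card_Tr_mul_eq (pow_mul_sq_add_self_ne_zero hx0 hx1 d) 0
    simp only [h, and_true]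
    omega
  · simp [h]

lemma columnWeight_of_independent (hQ : Fintype.card F = 4 * q) {a x : F} (hx0 : x ≠ 0)
    (hx1 : x ≠ 1) (ha : a ≠ 0) (hxa : x ^ 2 + x ≠ a) (b : F) : columnWeight d a b x = q := by
  have huv : x ^ d * (x ^ 2 + x) ≠ a * x ^ d := fun h =>
    hxa (mul_left_cancel₀ (pow_ne_zero d hx0) (h.trans (mul_comm _ _)))
  have := card_Tr_mul_eq_and_Tr_mul_eq (pow_mul_sq_add_self_ne_zero hx0 hx1 d)
    (mul_ne_zero ha (pow_ne_zero d hx0)) huv 0 (1 + Tr (b * x))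
  rw [columnWeight_eq d hx0]
  omega

lemma sum_columnWeight_zero_left (hQ : Fintype.card F = 4 * q) (b : F) :
    ∑ x, columnWeight d 0 b x =
      2 * q * #{x | Tr (b * x) = 1} + if Tr b = 1 then 2 * q else 0 := by
  have hcol (x : F) : columnWeight d 0 b x = (if Tr (b * x) = 1 then 2 * q else 0) +
      if x = 1 then (if Tr b = 1 then 2 * q else 0) else 0 := by
    by_cases hx0 : x = 0
    · simp [hx0]
    by_cases hx1 : x = 1
    · subst hx1
      rw [columnWeight_zero_one d hQ, mul_one, if_pos rfl]
      split_ifs <;> omega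
    · simp [columnWeight_of_dependent d hQ hx0 hx1 (Or.inl rfl), hx1]
  rw [sum_congr rfl fun x _ => hcol x, sum_add_distrib, sum_ite_eq', if_pos (mem_univ _),
    sum_ite_const]

lemma sum_columnWeight_of_ne_zero (hQ : Fintype.card F = 4 * q) {a : F} (ha : a ≠ 0) (b : F) :
    ∑ x, columnWeight d a b x + q * #{x | x ^ 2 + x = a} =
      4 * q * q + 2 * q * #{x | x ^ 2 + x = a ∧ Tr (b * x) = 1} := by
  have hcol (x : F) : columnWeight d a b x + (if x ^ 2 + x = a then q else 0) +
      (if x = 0 then q else 0) =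
      q + (if x = 1 then q else 0) + if x ^ 2 + x = a ∧ Tr (b * x) = 1 then 2 * q else 0 := by
    by_cases hx0 : x = 0
    · simp [hx0, ha.symm]
    by_cases hx1 : x = 1
    · simp [hx1, columnWeight_one_of_ne_zero d hQ ha, CharTwo.add_self_eq_zero, ha.symm]
      omega
    by_cases hxa : x ^ 2 + x = a
    · simp [columnWeight_of_dependent d hQ hx0 hx1 (Or.inr hxa.symm), hxa, hx0, hx1]
      omega
    · simp [columnWeight_of_independent d hQ hx0 hx1 ha hxa, hxa, hx0, hx1]
  have := sum_congr rfl fun x (_ : x ∈ univ) => hcol x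
  simp only [sum_add_distrib, sum_ite_const, sum_const, card_univ, hQ, smul_eq_mul,
    sum_ite_eq', mem_univ, if_true] at this
  linarith

@[simp]
lemma wt2_zero_zero : wt2 d (0 : F) 0 = 0 := by
  simp [wt2]

lemma wt2_zero_left (hQ : Fintype.card F = 4 * q) {b : F} (hb : b ≠ 0) :
    wt2 d 0 b = if Tr b = 1 then 4 * q * q else 4 * q * q - 2 * q := by
  have := wt2_add_card_eq_sum_columnWeight d 0 b
  rw [sum_columnWeight_zero_left d hQ, card_Tr_mul_eq_one hQ, if_neg hb,
    show 2 * q * (2 * q) = 4 * q * q by ring] at this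
  split_ifs at this ⊢ <;> omega

lemma wt2_of_Tr_eq_one (hQ : Fintype.card F = 4 * q) {a : F} (ha : Tr a = 1) (b : F) :
    wt2 d a b = if b = 0 then 4 * q * q else 4 * q * q - 2 * q := by
  have ha0 : a ≠ 0 := by rintro rfl; simp at ha
  have hS : ({x | x ^ 2 + x = a} : Finset F) = ∅ := by
    ext x; simp only [mem_filter, mem_univ, true_and, notMem_empty, iff_false]
    rintro rfl; simp [Tr_sq_add_self] at ha
  have := wt2_add_card_eq_sum_columnWeight d a b
  have hsum := sum_columnWeight_of_ne_zero d hQ ha0 b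
  rw [← filter_filter, hS, filter_empty, card_empty] at hsum
  rw [card_Tr_mul_eq_one hQ] at this
  split_ifs at this ⊢ <;> omega

lemma wt2_of_sq_add_self_eq (hQ : Fintype.card F = 4 * q) {a r : F} (ha : a ≠ 0)
    (hr : r ^ 2 + r = a) (b : F) :
    wt2 d a b = if b = 0 ∨ Tr b = 1 then 4 * q * q - 2 * q
      else if Tr (r * b) = 1 then 4 * q * q else 4 * q * q - 4 * q := by
  have hS : ({x | x ^ 2 + x = a} : Finset F) = {r, r + 1} := by
    ext x; simp [← hr, sq_add_self_eq_sq_add_self_iff]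
  have hr1 : r ≠ r + 1 := by simp
  have hT : #{x | x ^ 2 + x = a ∧ Tr (b * x) = 1} =
      (if Tr (r * b) = 1 then 1 else 0) + if Tr (r * b) + Tr b = 1 then 1 else 0 := by
    rw [← filter_filter, hS, card_filter, sum_pair hr1, mul_add, mul_one, Tr_add, mul_comm b r]
  have := wt2_add_card_eq_sum_columnWeight d a b
  have hsum := sum_columnWeight_of_ne_zero d hQ ha b
  rw [hS, card_pair hr1, hT] at hsum
  rw [card_Tr_mul_eq_one hQ] at this
  by_cases hb : b = 0
  · simp [hb] at hsum this ⊢; omega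
  rcases ZMod.two_eq_zero_or_eq_one (Tr b) with h | h <;>
    rcases ZMod.two_eq_zero_or_eq_one (Tr (r * b)) with h' | h' <;>
    simp [h, h', hb] at hsum this ⊢ <;> omega

lemma card_wt2_zero_left (hQ : Fintype.card F = 4 * q) (hq : 2 ≤ q) :
    #{b | wt2 d (0 : F) b = 4 * q * q - 4 * q} = 0 ∧
    #{b | wt2 d (0 : F) b = 4 * q * q - 2 * q} = 2 * q - 1 ∧
    #{b | wt2 d (0 : F) b = 4 * q * q} = 2 * q := by
  have hqq : 8 * q ≤ 4 * q * q := by nlinarith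
  have hwt (b : F) : wt2 d 0 b =
      if b = 0 then 0 else if Tr b = 1 then 4 * q * q else 4 * q * q - 2 * q := by
    by_cases hb : b = 0
    · simp [hb]
    · rw [if_neg hb, wt2_zero_left d hQ hb]
  have h₁ (b : F) : wt2 d 0 b ≠ 4 * q * q - 4 * q := by
    rw [hwt]; split_ifs <;> omega
  have h₂ (b : F) : wt2 d 0 b = 4 * q * q - 2 * q ↔ b ≠ 0 ∧ Tr b = 0 := by
    rcases ZMod.two_eq_zero_or_eq_one (Tr b) with h | h <;> rw [hwt] <;> split_ifs <;>
      simp_all <;> omega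
  have h₃ (b : F) : wt2 d 0 b = 4 * q * q ↔ Tr b = 1 := by
    rcases ZMod.two_eq_zero_or_eq_one (Tr b) with h | h <;> rw [hwt] <;> split_ifs <;>
      simp_all <;> omega
  have h0 := card_filter_ne_add_ite (fun b : F => Tr b = 0) 0
  simp only [Tr_zero, if_true, card_Tr_eq hQ] at h0
  refine ⟨by simp [h₁], ?_, ?_⟩
  · rw [filter_congr fun b _ => h₂ b]
    omega
  · rw [filter_congr fun b _ => h₃ b, card_Tr_eq hQ]

lemma card_wt2_of_Tr_eq_one (hQ : Fintype.card F = 4 * q) (hq : 2 ≤ q) {a : F}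
    (ha : Tr a = 1) :
    #{b | wt2 d a b = 4 * q * q - 4 * q} = 0 ∧
    #{b | wt2 d a b = 4 * q * q - 2 * q} = 4 * q - 1 ∧
    #{b | wt2 d a b = 4 * q * q} = 1 := by
  have hqq : 8 * q ≤ 4 * q * q := by nlinarith
  have h₁ (b : F) : wt2 d a b ≠ 4 * q * q - 4 * q := by
    rw [wt2_of_Tr_eq_one d hQ ha]; split_ifs <;> omega
  have h₂ (b : F) : wt2 d a b = 4 * q * q - 2 * q ↔ b ≠ 0 := by
    rw [wt2_of_Tr_eq_one d hQ ha]; split_ifs <;> simp_all; omega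
  have h₃ (b : F) : wt2 d a b = 4 * q * q ↔ b = 0 := by
    rw [wt2_of_Tr_eq_one d hQ ha]; split_ifs <;> simp_all; omega
  refine ⟨by simp [h₁], ?_, ?_⟩
  · rw [filter_congr fun b _ => h₂ b, filter_ne', card_erase_of_mem (mem_univ _), card_univ, hQ]
  · rw [filter_congr fun b _ => h₃ b]
    exact card_eq_one.2 ⟨0, by ext; simp⟩

lemma card_wt2_of_Tr_eq_zero (hQ : Fintype.card F = 4 * q) (hq : 2 ≤ q) {a : F} (ha0 : a ≠ 0)
    (ha : Tr a = 0) :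
    #{b | wt2 d a b = 4 * q * q - 4 * q} = q - 1 ∧
    #{b | wt2 d a b = 4 * q * q - 2 * q} = 2 * q + 1 ∧
    #{b | wt2 d a b = 4 * q * q} = q := by
  have hqq : 8 * q ≤ 4 * q * q := by nlinarith
  obtain ⟨r, hr⟩ := exists_sq_add_self_eq ha
  have hr0 : r ≠ 0 := by rintro rfl; simp [← hr] at ha0
  have hr1 : r ≠ 1 := by rintro rfl; simp [← hr, CharTwo.add_self_eq_zero] at ha0
  have hcount (s t : ZMod 2) : #{b | Tr b = s ∧ Tr (r * b) = t} = q := by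
    have := card_Tr_mul_eq_and_Tr_mul_eq one_ne_zero hr0 (Ne.symm hr1) s t
    simp only [one_mul] at this
    omega
  have hwt := wt2_of_sq_add_self_eq d hQ ha0 hr
  have h₁ (b : F) : wt2 d a b = 4 * q * q - 4 * q ↔ b ≠ 0 ∧ Tr b = 0 ∧ Tr (r * b) = 0 := by
    rcases ZMod.two_eq_zero_or_eq_one (Tr b) with h | h <;>
      rcases ZMod.two_eq_zero_or_eq_one (Tr (r * b)) with h' | h' <;>
      by_cases hb : b = 0 <;> simp [hwt, h, h', hb] <;> omega
  have h₂ (b : F) : wt2 d a b = 4 * q * q - 2 * q ↔ b = 0 ∨ Tr b = 1 := by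
    rcases ZMod.two_eq_zero_or_eq_one (Tr b) with h | h <;>
      rcases ZMod.two_eq_zero_or_eq_one (Tr (r * b)) with h' | h' <;>
      by_cases hb : b = 0 <;> simp [hwt, h, h', hb] <;> omega
  have h₃ (b : F) : wt2 d a b = 4 * q * q ↔ Tr b = 0 ∧ Tr (r * b) = 1 := by
    rcases ZMod.two_eq_zero_or_eq_one (Tr b) with h | h <;>
      rcases ZMod.two_eq_zero_or_eq_one (Tr (r * b)) with h' | h' <;>
      by_cases hb : b = 0 <;> simp [hwt, h, h', hb] <;> omega
  refine ⟨?_, ?_, ?_⟩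
  · have h0 := card_filter_ne_add_ite (fun b : F => Tr b = 0 ∧ Tr (r * b) = 0) 0
    simp only [mul_zero, Tr_zero, and_self, if_true, hcount] at h0
    rw [filter_congr fun b _ => h₁ b]
    omega
  · rw [filter_congr fun b _ => h₂ b, filter_or,
      card_union_of_disjoint (disjoint_filter.2 fun b _ hb => by simp [hb]),
      card_eq_one.2 ⟨0, by ext; simp⟩, card_Tr_eq hQ, add_comm]
  · rw [filter_congr fun b _ => h₃ b, hcount]

lemma sum_eq_of_Tr_cases (hQ : Fintype.card F = 4 * q) (f : F → ℕ) {c₀ c₁ c₂ : ℕ}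
    (h₀ : f 0 = c₀) (h₁ : ∀ a, Tr a = 1 → f a = c₁) (h₂ : ∀ a, a ≠ 0 → Tr a = 0 → f a = c₂) :
    ∑ a, f a = c₀ + 2 * q * c₁ + (2 * q - 1) * c₂ := by
  have hf (a : F) : f a = (if a = 0 then c₀ else 0) + (if Tr a = 1 then c₁ else 0) +
      if a ≠ 0 ∧ Tr a = 0 then c₂ else 0 := by
    by_cases ha : a = 0
    · simp [ha, h₀]
    rcases ZMod.two_eq_zero_or_eq_one (Tr a) with h | h <;> simp [ha, h, h₁, h₂]
  have h0 := card_filter_ne_add_ite (fun b : F => Tr b = 0) 0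
  simp only [Tr_zero, if_true, card_Tr_eq hQ] at h0
  rw [sum_congr rfl fun a _ => hf a, sum_add_distrib, sum_add_distrib, sum_ite_eq',
    if_pos (mem_univ _), sum_ite_const, sum_ite_const, card_Tr_eq hQ,
    show #{a : F | a ≠ 0 ∧ Tr a = 0} = 2 * q - 1 by omega]
  ring

lemma card_wt2_eq_min (hQ : Fintype.card F = 4 * q) (hq : 2 ≤ q) :
    #{ab : F × F | wt2 d ab.1 ab.2 = 4 * q * q - 4 * q} = q * (2 * q - 3) + 1 := by
  rw [card_filter_prod_eq_sum, sum_eq_of_Tr_cases hQ _ (card_wt2_zero_left d hQ hq).1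
    (fun a ha => (card_wt2_of_Tr_eq_one d hQ hq ha).1)
    (fun a ha0 ha => (card_wt2_of_Tr_eq_zero d hQ hq ha0 ha).1)]
  zify [show 1 ≤ q by omega, show 1 ≤ 2 * q by omega, show 3 ≤ 2 * q by omega]
  ring

lemma card_wt2_eq_mid (hQ : Fintype.card F = 4 * q) (hq : 2 ≤ q) :
    #{ab : F × F | wt2 d ab.1 ab.2 = 4 * q * q - 2 * q} = 3 * (4 * q * q) - 2 := by
  rw [card_filter_prod_eq_sum, sum_eq_of_Tr_cases hQ _ (card_wt2_zero_left d hQ hq).2.1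
    (fun a ha => (card_wt2_of_Tr_eq_one d hQ hq ha).2.1)
    (fun a ha0 ha => (card_wt2_of_Tr_eq_zero d hQ hq ha0 ha).2.1)]
  zify [show 1 ≤ 2 * q by omega, show 1 ≤ 4 * q by omega,
    show 2 ≤ 3 * (4 * q * q) by nlinarith]
  ring

lemma card_wt2_eq_max (hQ : Fintype.card F = 4 * q) (hq : 2 ≤ q) :
    #{ab : F × F | wt2 d ab.1 ab.2 = 4 * q * q} = q * (2 * q + 3) := by
  rw [card_filter_prod_eq_sum, sum_eq_of_Tr_cases hQ _ (card_wt2_zero_left d hQ hq).2.2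
    (fun a ha => (card_wt2_of_Tr_eq_one d hQ hq ha).2.2)
    (fun a ha0 ha => (card_wt2_of_Tr_eq_zero d hQ hq ha0 ha).2.2)]
  zify [show 1 ≤ 2 * q by omega]
  ring

lemma le_wt2 (hQ : Fintype.card F = 4 * q) {a b : F} (hab : (a, b) ≠ (0, 0)) :
    4 * q * q - 4 * q ≤ wt2 d a b := by
  by_cases ha : a = 0
  · have hb : b ≠ 0 := by rintro rfl; exact hab (by rw [ha])
    rw [ha, wt2_zero_left d hQ hb]
    split_ifs <;> omega
  rcases ZMod.two_eq_zero_or_eq_one (Tr a) with h | h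
  · obtain ⟨r, hr⟩ := exists_sq_add_self_eq h
    rw [wt2_of_sq_add_self_eq d hQ ha hr]
    split_ifs <;> omega
  · rw [wt2_of_Tr_eq_one d hQ h]
    split_ifs <;> omega

lemma codeword_injective (hQ : Fintype.card F = 4 * q) (hq : 2 ≤ q) :
    Function.Injective fun ab : F × F => fun p : D2 F d =>
      Tr (ab.1 * p.1.1 ^ d * p.1.2 + ab.2 * p.1.1) := by
  rintro ⟨a₁, b₁⟩ ⟨a₂, b₂⟩ h
  by_contra hne
  have hab : (a₁ + a₂, b₁ + b₂) ≠ (0, 0) := by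
    simpa [CharTwo.add_eq_zero] using hne
  have hwt : wt2 d (a₁ + a₂) (b₁ + b₂) = 0 := by
    rw [wt2, card_eq_zero, filter_eq_empty_iff]
    intro p hp
    have hp' := congrFun h ⟨p, hp⟩
    simp only at hp'
    rw [show (a₁ + a₂) * p.1 ^ d * p.2 + (b₁ + b₂) * p.1 =
      (a₁ * p.1 ^ d * p.2 + b₁ * p.1) + (a₂ * p.1 ^ d * p.2 + b₂ * p.1) by ring, Tr_add, hp',
      CharTwo.add_self_eq_zero]
    exact zero_ne_one
  have hqq : 8 * q ≤ 4 * q * q := by nlinarith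
  have := le_wt2 d hQ hab
  omega

lemma card_D2 (hQ : Fintype.card F = 4 * q) : #(D2 F d) = 8 * q * q - 4 * q + 1 := by
  have hrow (x : F) : #{y | (x, y) ∈ D2 F d} + (if x ≠ 0 then 1 else 0) =
      (if x ≠ 0 then 2 * q else 0) + if x = 1 then 2 * q else 0 := by
    by_cases hx0 : x = 0
    · simp [hx0, D2]
    have h := card_filter_ne_add_ite (fun y => Tr (x ^ d * (x ^ 2 + x) * y) = 0) 0
    simp only [mul_zero, Tr_zero, if_true] at h
    simp only [D2, mem_filter, mem_univ, hx0, ne_eq, not_false_eq_true, true_and, if_true,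
      show ∀ y, x ^ (d + 2) * y + x ^ (d + 1) * y = x ^ d * (x ^ 2 + x) * y by intro y; ring]
    rw [h]
    by_cases hx1 : x = 1
    · simp [hx1, CharTwo.add_self_eq_zero, hQ]; ring
    · have := card_Tr_mul_eq (pow_mul_sq_add_self_ne_zero hx0 hx1 d) 0
      rw [if_neg hx1]
      omega
  have hsum := sum_congr rfl fun x (_ : x ∈ univ) => hrow x
  have hne : #{x : F | x ≠ 0} = 4 * q - 1 := by
    rw [filter_ne', card_erase_of_mem (mem_univ _), card_univ, hQ]
  rw [sum_add_distrib, sum_add_distrib, sum_ite_const, sum_ite_const, sum_ite_eq',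
    if_pos (mem_univ _), hne, one_mul, Nat.mul_sub_one, show 2 * q * (4 * q) = 8 * q * q by ring]
    at hsum
  have hD2 : #(D2 F d) = ∑ x, #{y | (x, y) ∈ D2 F d} := by
    conv_lhs => rw [← filter_univ_mem (D2 F d)]
    exact card_filter_prod_eq_sum _
  have hq : 0 < q := by have := Fintype.card_pos (α := F); omega
  have : 4 * q ≤ 8 * q * q := by nlinarith
  omega

end Code

theorem stmt16_general (m d : ℕ) (hm : 4 ≤ m) (hF : Fintype.card F = 2 ^ m) :
    -- length
    (D2 F d).card = 2 ^ (2 * m - 1) - 2 ^ m + 1 ∧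
    -- dimension 2m
    Function.Injective (fun ab : F × F => fun q : (D2 F d) =>
      Tr (ab.1 * q.1.1 ^ d * q.1.2 + ab.2 * q.1.1)) ∧
    -- minimum distance
    (∀ a b : F, (a, b) ≠ (0, 0) → 2 ^ m * (2 ^ (m - 2) - 1) ≤ wt2 d a b) ∧
    -- weight distribution
    (univ.filter fun ab : F × F => wt2 d ab.1 ab.2 = 2 ^ m * (2 ^ (m - 2) - 1)).card
      = 2 ^ (m - 2) * (2 ^ (m - 1) - 3) + 1 ∧
    (univ.filter fun ab : F × F => wt2 d ab.1 ab.2 = 2 ^ (m - 1) * (2 ^ (m - 1) - 1)).card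
      = 3 * 2 ^ (2 * m - 2) - 2 ∧
    (univ.filter fun ab : F × F => wt2 d ab.1 ab.2 = 2 ^ (2 * m - 2)).card
      = 2 ^ (m - 2) * (2 ^ (m - 1) + 3) := by
  obtain ⟨n, rfl⟩ : ∃ n, m = n + 2 := ⟨m - 2, by omega⟩
  have hq : 2 ≤ 2 ^ n := le_self_pow₀ one_le_two (by omega)
  have hQ : Fintype.card F = 4 * 2 ^ n := by rw [hF]; ring
  rw [show n + 2 - 2 = n by omega, show n + 2 - 1 = n + 1 by omega,
    show 2 * (n + 2) - 2 = n + n + 2 by omega, show 2 * (n + 2) - 1 = n + n + 3 by omega,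
    show 2 ^ (n + 2) = 4 * 2 ^ n by ring, show 2 ^ (n + 1) = 2 * 2 ^ n by ring,
    show 2 ^ (n + n + 2) = 4 * 2 ^ n * 2 ^ n by ring,
    show 2 ^ (n + n + 3) = 8 * 2 ^ n * 2 ^ n by ring]
  generalize 2 ^ n = q at hq hQ ⊢
  rw [Nat.mul_sub_one, Nat.mul_sub_one, show 2 * q * (2 * q) = 4 * q * q by ring]
  exact ⟨card_D2 d hQ, codeword_injective d hQ hq, fun a b => le_wt2 d hQ,
    card_wt2_eq_min d hQ hq, card_wt2_eq_mid d hQ hq, card_wt2_eq_max d hQ hq⟩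

theorem stmt16 (m d : ℕ) (hm : 4 ≤ m) (hd : 1 ≤ d) (hF : Fintype.card F = 2 ^ m) :
    -- length
    (D2 F d).card = 2 ^ (2 * m - 1) - 2 ^ m + 1 ∧
    -- dimension 2m
    Function.Injective (fun ab : F × F => fun q : (D2 F d) =>
      Tr (ab.1 * q.1.1 ^ d * q.1.2 + ab.2 * q.1.1)) ∧
    -- minimum distance
    (∀ a b : F, (a, b) ≠ (0, 0) → 2 ^ m * (2 ^ (m - 2) - 1) ≤ wt2 d a b) ∧
    -- weight distribution
    (univ.filter fun ab : F × F => wt2 d ab.1 ab.2 = 2 ^ m * (2 ^ (m - 2) - 1)).card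
      = 2 ^ (m - 2) * (2 ^ (m - 1) - 3) + 1 ∧
    (univ.filter fun ab : F × F => wt2 d ab.1 ab.2 = 2 ^ (m - 1) * (2 ^ (m - 1) - 1)).card
      = 3 * 2 ^ (2 * m - 2) - 2 ∧
    (univ.filter fun ab : F × F => wt2 d ab.1 ab.2 = 2 ^ (2 * m - 2)).card
      = 2 ^ (m - 2) * (2 ^ (m - 1) + 3) :=
  stmt16_general m d hm hF
end

section
/- Let m ≥ 3 and d a positive integer. The binary linear code C_{D₃} = { (Tr(a x^d y + b x))_{(x,y) ∈ D₃} : a, b ∈ 𝔽_{2^m} }, with D₃ = { (x,y) ∈ 𝔽_{2^m}^* × 𝔽_{2^m} : Tr(x^{d+1} y) = 0 and Tr(x^d y) = 1 }, is a [2^{m−1}(2^{m−1} − 1), 2m, 2^{m−1}(2^{m−2} − 1)] four-weight code with weight distribution: weight 2^{m−1}(2^{m−2} − 1) with frequency 2^{2m−2} − 1; weight 2^{m−2}(2^{m−1} − 1) with frequency 2^{2m−1}; weight 2^{2m−3} with frequency 2^{2m−2} − 1; weight 2^{m−1}(2^{m−1} − 1) with frequency 1. -/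
open Finset
open scoped Classical

variable {F : Type*} [Field F] [Fintype F] [Algebra (ZMod 2) F]

noncomputable def D3 (F : Type*) [Field F] [Fintype F] [Algebra (ZMod 2) F] (d : ℕ) :
    Finset (F × F) :=
  univ.filter fun q => q.1 ≠ 0 ∧ Tr (q.1 ^ (d + 1) * q.2) = 0 ∧ Tr (q.1 ^ d * q.2) = 1

noncomputable def wt3 (d : ℕ) (a b : F) : ℕ :=
  ((D3 F d).filter fun q => Tr (a * q.1 ^ d * q.2 + b * q.1) = 1).card

set_option linter.unusedSectionVars false
set_option linter.unusedVariables false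

lemma two_eq_zero : (2 : F) = 0 := by
  have h : (2 : F) = algebraMap (ZMod 2) F 2 := (map_ofNat (algebraMap (ZMod 2) F) 2).symm
  rw [h, show (2 : ZMod 2) = 0 by decide, map_zero]

lemma add_self' (x : F) : x + x = 0 := by
  have h := two_eq_zero (F := F)
  calc x + x = 2 * x := by ring
  _ = 0 := by rw [h, zero_mul]

lemma eq_of_add_eq_zero' {u v : F} (h : u + v = 0) : u = v := by
  have : u + v + v = v := by rw [h, zero_add]
  rwa [add_assoc, add_self', add_zero] at this

lemma Tr_add_s18 (x y : F) : Tr (x + y) = Tr x + Tr y := map_add _ _ _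

lemma Tr_mul_add (c y w : F) : Tr (c * (y + w)) = Tr (c * y) + Tr (c * w) := by
  rw [mul_add, Tr_add_s18]

lemma Tr_add_mul (c c' y : F) : Tr ((c + c') * y) = Tr (c * y) + Tr (c' * y) := by
  rw [add_mul, Tr_add_s18]

lemma ndg {c : F} (hc : c ≠ 0) : ∃ y : F, Tr (c * y) = 1 := by
  have h := traceForm_nondegenerate (ZMod 2) F
  by_contra hf
  push_neg at hf
  apply hc
  apply h.1
  intro y
  have := hf y
  have hv : ∀ u : ZMod 2, u ≠ 1 → u = 0 := by decide
  simpa [Algebra.traceForm_apply, Tr] using hv _ this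

lemma eq_zero_of_tr {c : F} (h : ∀ y : F, Tr (c * y) = 0) : c = 0 := by
  by_contra hc
  obtain ⟨y, hy⟩ := ndg hc
  rw [h y] at hy
  exact absurd hy (by decide)

/-- shifting bijection -/
lemma card_shift (p q : F → Prop) [DecidablePred p] [DecidablePred q] (y0 : F) (h : ∀ y, p y ↔ q (y + y0)) :
    (univ.filter p).card = (univ.filter q).card := by
  apply Finset.card_bij' (fun y _ => y + y0) (fun y _ => y + y0)
  · intro a ha
    simp only [mem_filter, mem_univ, true_and] at ha ⊢
    exact (h a).1 ha
  · intro a ha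
    simp only [mem_filter, mem_univ, true_and] at ha ⊢
    apply (h _).2
    rwa [add_assoc, add_self', add_zero]
  · intro a _; rw [add_assoc, add_self', add_zero]
  · intro a _; rw [add_assoc, add_self', add_zero]

/-- The halving lemma -/
lemma halve (P : F → Prop) (c : F) (n : ℕ)
    (htot : (univ.filter P).card = 2 * n)
    (y0 : F) (hinv : ∀ y, P y ↔ P (y + y0)) (hy0 : Tr (c * y0) = 1)
    (ε : ZMod 2) :
    (univ.filter fun y => P y ∧ Tr (c * y) = ε).card = n := by
  have key : ∀ δ : ZMod 2,
      (univ.filter fun y => P y ∧ Tr (c * y) = δ).card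
        = (univ.filter fun y => P y ∧ Tr (c * y) = δ + 1).card := by
    intro δ
    apply card_shift _ _ y0
    intro y
    constructor
    · rintro ⟨h1, h2⟩
      exact ⟨(hinv y).1 h1, by rw [Tr_mul_add, h2, hy0]⟩
    · rintro ⟨h1, h2⟩
      refine ⟨(hinv y).2 h1, ?_⟩
      rw [Tr_mul_add, hy0] at h2
      have : ∀ u δ : ZMod 2, u + 1 = δ + 1 → u = δ := by decide
      exact this _ _ h2
  have hsum : (univ.filter fun y => P y ∧ Tr (c * y) = 0).card
      + (univ.filter fun y => P y ∧ Tr (c * y) = 1).card = 2 * n := by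
    rw [← htot]
    have h1 : (univ.filter fun y => P y ∧ Tr (c * y) = 0)
        = (univ.filter P).filter (fun y => Tr (c * y) = 0) := by
      rw [Finset.filter_filter]
    have h2 : (univ.filter fun y => P y ∧ Tr (c * y) = 1)
        = (univ.filter P).filter (fun y => ¬ (Tr (c * y) = 0)) := by
      rw [Finset.filter_filter]
      apply Finset.filter_congr
      intro y _
      have : ∀ u : ZMod 2, u = 1 ↔ ¬ (u = 0) := by decide
      rw [this]
    rw [h1, h2]
    exact Finset.card_filter_add_card_filter_not _
  have h01 := key 0
  have hall : ∀ u : ZMod 2, u = 0 ∨ u = 1 := by decide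
  have hε := hall ε
  norm_num at h01
  rcases hε with rfl | rfl
  · omega
  · omega

lemma zmod_not_one {u : ZMod 2} (h : u ≠ 1) : u = 0 := by revert h; revert u; decide
lemma zmod_not_zero {u : ZMod 2} (h : u ≠ 0) : u = 1 := by revert h; revert u; decide
lemma zmod_cancel {u v : ZMod 2} (h : u + v = 0) : u = v := by revert h; revert u v; decide
lemma zmod_cancel3 {u v w : ZMod 2} (h : u + v + w = 0) : u = v + w := by
  revert h; revert u v w; decide
lemma zmod_addself (u : ZMod 2) : u + u = 0 := by revert u; decide
lemma hall (u : ZMod 2) : u = 0 ∨ u = 1 := by revert u; decide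

lemma card_filter_congr {α : Type*} [Fintype α] {p q : α → Prop}
    {ip : DecidablePred p} {iq : DecidablePred q}
    (h : ∀ y, p y ↔ q y) : (@filter α p ip univ).card = (@filter α q iq univ).card := by
  congr 1
  ext y
  simp [h y]

lemma count1 {m : ℕ} (hm : 1 ≤ m) (hF : Fintype.card F = 2 ^ m) {c : F} (hc : c ≠ 0)
    (ε : ZMod 2) : (univ.filter fun y : F => Tr (c * y) = ε).card = 2 ^ (m - 1) := by
  obtain ⟨y0, hy0⟩ := ndg hc
  have h := halve (fun _ => True) c (2 ^ (m - 1)) ?_ y0 (fun y => by simp) hy0 ε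
  · exact (card_filter_congr (fun y => by simp)).trans h
  · simp only [Finset.filter_true, Finset.card_univ, hF]
    rw [← pow_succ']
    congr 1
    omega

lemma ex2 {c1 c2 : F} (h1 : c1 ≠ 0) (h2 : c2 ≠ 0) (h12 : c1 ≠ c2) :
    ∃ y, Tr (c1 * y) = 0 ∧ Tr (c2 * y) = 1 := by
  by_contra hf
  push_neg at hf
  have hf' : ∀ y, Tr (c1 * y) = 0 → Tr (c2 * y) = 0 := fun y hy => zmod_not_one (hf y hy)
  obtain ⟨w, hw⟩ := ndg h2
  have hw1 : Tr (c1 * w) = 1 := by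
    rcases hall (Tr (c1 * w)) with h | h
    · rw [hf' w h] at hw; exact absurd hw (by decide)
    · exact h
  have hkey : ∀ y, Tr ((c1 + c2) * y) = 0 := by
    intro y
    rw [Tr_add_mul]
    rcases hall (Tr (c1 * y)) with h | h
    · rw [h, hf' y h, add_zero]
    · have hc1 : Tr (c1 * (y + w)) = 0 := by rw [Tr_mul_add, h, hw1]; decide
      have hc2 := hf' _ hc1
      rw [Tr_mul_add, hw] at hc2
      have h2y : Tr (c2 * y) = 1 := by
        rcases hall (Tr (c2 * y)) with h' | h'
        · rw [h'] at hc2; exact absurd hc2 (by decide)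
        · exact h'
      rw [h, h2y]; decide
  exact h12 (eq_of_add_eq_zero' (eq_zero_of_tr hkey))

lemma count2 {m : ℕ} (hm : 2 ≤ m) (hF : Fintype.card F = 2 ^ m) {c1 c2 : F}
    (h1 : c1 ≠ 0) (h2 : c2 ≠ 0) (h12 : c1 ≠ c2) (ε1 ε2 : ZMod 2) :
    (univ.filter fun y : F => Tr (c1 * y) = ε1 ∧ Tr (c2 * y) = ε2).card = 2 ^ (m - 2) := by
  obtain ⟨y0, hy01, hy02⟩ := ex2 h1 h2 h12
  have h := halve (fun y => Tr (c1 * y) = ε1) c2 (2 ^ (m - 2)) ?_ y0 ?_ hy02 ε2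
  · exact (card_filter_congr (fun y => Iff.rfl)).trans h
  · refine ((card_filter_congr (fun y => Iff.rfl)).trans
      (count1 (by omega) hF h1 ε1)).trans ?_
    rw [← pow_succ']
    congr 1
    omega
  · intro y
    simp only [Tr_mul_add, hy01, add_zero]

lemma ex3 {c1 c2 c3 : F} (h1 : c1 ≠ 0) (h2 : c2 ≠ 0) (h3 : c3 ≠ 0)
    (h12 : c1 ≠ c2) (h13 : c1 ≠ c3) (h23 : c2 ≠ c3) (h123 : c3 ≠ c1 + c2) :
    ∃ y, Tr (c1 * y) = 0 ∧ Tr (c2 * y) = 0 ∧ Tr (c3 * y) = 1 := by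
  by_contra hf
  push_neg at hf
  have hf' : ∀ y, Tr (c1 * y) = 0 → Tr (c2 * y) = 0 → Tr (c3 * y) = 0 :=
    fun y a b => zmod_not_one (hf y a b)
  obtain ⟨y10, hy102, hy101⟩ := ex2 h2 h1 (Ne.symm h12)
  obtain ⟨y01, hy011, hy012⟩ := ex2 h1 h2 h12
  set l1 := Tr (c3 * y10) with hl1
  set l2 := Tr (c3 * y01) with hl2
  have key : ∀ y, Tr (c3 * y) = Tr (c1 * y) * l1 + Tr (c2 * y) * l2 := by
    intro y
    rcases hall (Tr (c1 * y)) with t1 | t1 <;> rcases hall (Tr (c2 * y)) with t2 | t2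
    · rw [t1, t2, hf' y t1 t2, zero_mul, zero_mul, add_zero]
    · have hz1 : Tr (c1 * (y + y01)) = 0 := by rw [Tr_mul_add, t1, hy011, add_zero]
      have hz2 : Tr (c2 * (y + y01)) = 0 := by rw [Tr_mul_add, t2, hy012]; decide
      have h0 := hf' _ hz1 hz2
      rw [Tr_mul_add, ← hl2] at h0
      rw [t1, t2, zero_mul, zero_add, one_mul]
      exact zmod_cancel h0
    · have hz1 : Tr (c1 * (y + y10)) = 0 := by rw [Tr_mul_add, t1, hy101]; decide
      have hz2 : Tr (c2 * (y + y10)) = 0 := by rw [Tr_mul_add, t2, hy102, add_zero]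
      have h0 := hf' _ hz1 hz2
      rw [Tr_mul_add, ← hl1] at h0
      rw [t1, t2, zero_mul, add_zero, one_mul]
      exact zmod_cancel h0
    · have hz1 : Tr (c1 * (y + y10 + y01)) = 0 := by
        rw [Tr_mul_add, Tr_mul_add, t1, hy101, hy011]; decide
      have hz2 : Tr (c2 * (y + y10 + y01)) = 0 := by
        rw [Tr_mul_add, Tr_mul_add, t2, hy102, hy012]; decide
      have h0 := hf' _ hz1 hz2
      rw [Tr_mul_add, Tr_mul_add, ← hl1, ← hl2] at h0
      rw [t1, t2, one_mul, one_mul]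
      exact zmod_cancel3 h0
  rcases hall l1 with hl | hl <;> rcases hall l2 with hr | hr <;> rw [hl, hr] at key
  · apply h3
    apply eq_zero_of_tr
    intro y
    rw [key y, mul_zero, mul_zero, add_zero]
  · apply h23
    symm
    apply eq_of_add_eq_zero'
    apply eq_zero_of_tr
    intro y
    rw [Tr_add_mul, key y, mul_zero, mul_one, zero_add, zmod_addself]
  · apply h13
    symm
    apply eq_of_add_eq_zero'
    apply eq_zero_of_tr
    intro y
    rw [Tr_add_mul, key y, mul_zero, mul_one, add_zero, zmod_addself]
  · apply h123
    apply eq_of_add_eq_zero'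
    apply eq_zero_of_tr
    intro y
    rw [Tr_add_mul, key y, mul_one, mul_one, Tr_add_mul]
    generalize Tr (c1 * y) = u
    generalize Tr (c2 * y) = v
    revert u v; decide

lemma count3 {m : ℕ} (hm : 3 ≤ m) (hF : Fintype.card F = 2 ^ m) {c1 c2 c3 : F}
    (h1 : c1 ≠ 0) (h2 : c2 ≠ 0) (h3 : c3 ≠ 0)
    (h12 : c1 ≠ c2) (h13 : c1 ≠ c3) (h23 : c2 ≠ c3) (h123 : c3 ≠ c1 + c2)
    (ε1 ε2 ε3 : ZMod 2) :
    (univ.filter fun y : F => Tr (c1 * y) = ε1 ∧ Tr (c2 * y) = ε2 ∧ Tr (c3 * y) = ε3).card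
      = 2 ^ (m - 3) := by
  obtain ⟨y0, hy01, hy02, hy03⟩ := ex3 h1 h2 h3 h12 h13 h23 h123
  have h := halve (fun y => Tr (c1 * y) = ε1 ∧ Tr (c2 * y) = ε2) c3 (2 ^ (m - 3)) ?_ y0 ?_ hy03 ε3
  · exact (card_filter_congr (fun y => (and_assoc).symm)).trans h
  · refine ((card_filter_congr (fun y => Iff.rfl)).trans
      (count2 (by omega) hF h1 h2 h12 ε1 ε2)).trans ?_
    rw [← pow_succ']
    congr 1
    omega
  · intro y
    simp only [Tr_mul_add, hy01, hy02, add_zero]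

lemma Tr_zero_s18 : Tr (0 : F) = 0 := map_zero _

lemma zmod_shift1 (u v : ZMod 2) : u + v = 1 ↔ u = 1 + v := by revert u v; decide

lemma card_filter_false {α : Type*} [Fintype α] {p : α → Prop} {ip : DecidablePred p}
    (h : ∀ y, ¬ p y) : (@filter α p ip univ).card = 0 := by
  rw [card_filter_congr (iq := fun _ => instDecidableFalse) (q := fun _ => False)
    (fun y => iff_false_intro (h y))]
  simp

/-- inner predicate -/
def IP (d : ℕ) (a b x : F) (y : F) : Prop :=
  x ≠ 0 ∧ Tr (x ^ (d + 1) * y) = 0 ∧ Tr (x ^ d * y) = 1 ∧ Tr (a * x ^ d * y) = 1 + Tr (b * x)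

lemma inner_x0 (d : ℕ) (a b : F) : (univ.filter (IP d a b 0)).card = 0 :=
  card_filter_false (fun y hy => hy.1 rfl)

lemma inner_x1 (d : ℕ) (a b : F) : (univ.filter (IP d a b 1)).card = 0 := by
  apply card_filter_false
  rintro y ⟨_, h1, h2, _⟩
  simp only [one_pow] at h1 h2
  rw [h1] at h2
  exact absurd h2 (by decide)

lemma pow_cancel (d : ℕ) {x : F} (hx0 : x ≠ 0) {u v : F} (h : u * x ^ d = v * x ^ d) : u = v :=
  mul_right_cancel₀ (pow_ne_zero d hx0) h

lemma inner_generic {m : ℕ} (hm : 3 ≤ m) (hF : Fintype.card F = 2 ^ m) (d : ℕ)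
    {a b x : F} (hx0 : x ≠ 0) (hx1 : x ≠ 1) (ha0 : a ≠ 0) (ha1 : a ≠ 1)
    (hax : a ≠ x) (hax1 : a ≠ x + 1) :
    (univ.filter (IP d a b x)).card = 2 ^ (m - 3) := by
  have h2 : x ^ d ≠ 0 := pow_ne_zero d hx0
  have hpow : x ^ (d + 1) = x * x ^ d := by rw [pow_succ, mul_comm]
  have h1 : x ^ (d + 1) ≠ 0 := pow_ne_zero _ hx0
  have h12 : x ^ (d + 1) ≠ x ^ d := by
    rw [hpow]
    intro h
    exact hx1 (pow_cancel d hx0 (by rw [one_mul]; exact h))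
  have h13 : x ^ (d + 1) ≠ a * x ^ d := by
    rw [hpow]
    intro h
    exact hax (pow_cancel d hx0 (by rw [h])).symm
  have h23 : x ^ d ≠ a * x ^ d := by
    intro h
    exact ha1 (pow_cancel d hx0 (by rw [one_mul, ← h]))
  have h123 : a * x ^ d ≠ x ^ (d + 1) + x ^ d := by
    rw [hpow]
    intro h
    apply hax1
    apply pow_cancel d hx0
    rw [h, add_mul, one_mul]
  have h3 : a * x ^ d ≠ 0 := mul_ne_zero ha0 h2
  exact (card_filter_congr (fun y => by simp [IP, hx0])).trans
    (count3 hm hF h1 h2 h3 h12 h13 h23 h123 0 1 (1 + Tr (b * x)))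

lemma inner_xa {m : ℕ} (hm : 3 ≤ m) (hF : Fintype.card F = 2 ^ m) (d : ℕ)
    {a b : F} (ha0 : a ≠ 0) (ha1 : a ≠ 1) :
    (univ.filter (IP d a b a)).card = if Tr (b * a) = 1 then 2 ^ (m - 2) else 0 := by
  have hpow : a * a ^ d = a ^ (d + 1) := by rw [pow_succ, mul_comm]
  have h2 : a ^ d ≠ 0 := pow_ne_zero d ha0
  have h1 : a ^ (d + 1) ≠ 0 := pow_ne_zero _ ha0
  have h12 : a ^ (d + 1) ≠ a ^ d := by
    rw [pow_succ, mul_comm]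
    intro h
    exact ha1 (pow_cancel d ha0 (by rw [one_mul]; exact h))
  rcases hall (Tr (b * a)) with h | h
  · rw [h, if_neg (by decide)]
    apply card_filter_false
    rintro y ⟨_, hA, _, hC⟩
    rw [hpow, h, hA] at hC
    exact absurd hC (by decide)
  · rw [h, if_pos rfl]
    refine (card_filter_congr ?_).trans (count2 (by omega) hF h1 h2 h12 0 1)
    intro y
    simp only [IP, hpow, h]
    constructor
    · rintro ⟨_, hA, hB, _⟩; exact ⟨hA, hB⟩
    · rintro ⟨hA, hB⟩
      exact ⟨ha0, hA, hB, by rw [hA]; decide⟩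

lemma inner_xa1 {m : ℕ} (hm : 3 ≤ m) (hF : Fintype.card F = 2 ^ m) (d : ℕ)
    {a b : F} (ha0 : a ≠ 0) (ha1 : a ≠ 1) :
    (univ.filter (IP d a b (a + 1))).card
      = if Tr (b * (a + 1)) = 0 then 2 ^ (m - 2) else 0 := by
  have hx0 : a + 1 ≠ 0 := fun h => ha1 (eq_of_add_eq_zero' h)
  have h2 : (a + 1) ^ d ≠ 0 := pow_ne_zero d hx0
  have h1 : (a + 1) ^ (d + 1) ≠ 0 := pow_ne_zero _ hx0
  have h12 : (a + 1) ^ (d + 1) ≠ (a + 1) ^ d := by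
    rw [pow_succ, mul_comm]
    intro h
    have h' : a + 1 = 1 := pow_cancel d hx0 (by rw [one_mul]; exact h)
    apply ha0
    have h'' : a + 1 + 1 = 1 + 1 := by rw [h']
    rwa [add_assoc, add_self', add_zero] at h''
  have hkey : a * (a + 1) ^ d = (a + 1) ^ (d + 1) + (a + 1) ^ d := by
    have h' : (a + 1) ^ (d + 1) + (a + 1) ^ d
        = a * (a + 1) ^ d + ((a + 1) ^ d + (a + 1) ^ d) := by
      rw [pow_succ]; ring
    rw [h', add_self', add_zero]
  have htr : ∀ y, Tr (a * (a + 1) ^ d * y)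
      = Tr ((a + 1) ^ (d + 1) * y) + Tr ((a + 1) ^ d * y) := by
    intro y
    rw [hkey, Tr_add_mul]
  rcases hall (Tr (b * (a + 1))) with h | h
  · rw [h, if_pos rfl]
    refine (card_filter_congr ?_).trans (count2 (by omega) hF h1 h2 h12 0 1)
    intro y
    constructor
    · rintro ⟨_, hA, hB, _⟩; exact ⟨hA, hB⟩
    · rintro ⟨hA, hB⟩
      refine ⟨hx0, hA, hB, ?_⟩
      rw [htr, hA, hB, h]
      decide
  · rw [h, if_neg (by decide)]
    apply card_filter_false
    rintro y ⟨_, hA, hB, hC⟩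
    rw [htr, hA, hB, h] at hC
    exact absurd hC (by decide)

lemma inner_a0 {m : ℕ} (hm : 3 ≤ m) (hF : Fintype.card F = 2 ^ m) (d : ℕ)
    {b x : F} (hx0 : x ≠ 0) (hx1 : x ≠ 1) :
    (univ.filter (IP d 0 b x)).card = if Tr (b * x) = 1 then 2 ^ (m - 2) else 0 := by
  have h2 : x ^ d ≠ 0 := pow_ne_zero d hx0
  have h1 : x ^ (d + 1) ≠ 0 := pow_ne_zero _ hx0
  have h12 : x ^ (d + 1) ≠ x ^ d := by
    rw [pow_succ, mul_comm]
    intro h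
    exact hx1 (pow_cancel d hx0 (by rw [one_mul]; exact h))
  rcases hall (Tr (b * x)) with h | h
  · rw [h, if_neg (by decide)]
    apply card_filter_false
    rintro y ⟨_, _, _, hC⟩
    rw [zero_mul, zero_mul, Tr_zero_s18, h] at hC
    exact absurd hC (by decide)
  · rw [h, if_pos rfl]
    refine (card_filter_congr ?_).trans (count2 (by omega) hF h1 h2 h12 0 1)
    intro y
    constructor
    · rintro ⟨_, hA, hB, _⟩; exact ⟨hA, hB⟩
    · rintro ⟨hA, hB⟩
      refine ⟨hx0, hA, hB, ?_⟩
      rw [zero_mul, zero_mul, Tr_zero_s18, h]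
      decide

lemma inner_a1 {m : ℕ} (hm : 3 ≤ m) (hF : Fintype.card F = 2 ^ m) (d : ℕ)
    {b x : F} (hx0 : x ≠ 0) (hx1 : x ≠ 1) :
    (univ.filter (IP d 1 b x)).card = if Tr (b * x) = 0 then 2 ^ (m - 2) else 0 := by
  have h2 : x ^ d ≠ 0 := pow_ne_zero d hx0
  have h1 : x ^ (d + 1) ≠ 0 := pow_ne_zero _ hx0
  have h12 : x ^ (d + 1) ≠ x ^ d := by
    rw [pow_succ, mul_comm]
    intro h
    exact hx1 (pow_cancel d hx0 (by rw [one_mul]; exact h))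
  rcases hall (Tr (b * x)) with h | h
  · rw [h, if_pos rfl]
    refine (card_filter_congr ?_).trans (count2 (by omega) hF h1 h2 h12 0 1)
    intro y
    constructor
    · rintro ⟨_, hA, hB, _⟩; exact ⟨hA, hB⟩
    · rintro ⟨hA, hB⟩
      refine ⟨hx0, hA, hB, ?_⟩
      rw [one_mul, hB, h]
      decide
  · rw [h, if_neg (by decide)]
    apply card_filter_false
    rintro y ⟨_, _, hB, hC⟩
    rw [one_mul, hB, h] at hC
    exact absurd hC (by decide)

lemma card_prod_filter (Q : F → F → Prop) :
    (univ.filter fun q : F × F => Q q.1 q.2).card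
      = ∑ x : F, (univ.filter fun y : F => Q x y).card := by
  rw [Finset.card_filter, Fintype.sum_prod_type]
  apply Finset.sum_congr rfl
  intro x _
  rw [Finset.card_filter]

lemma wt3_sum (d : ℕ) (a b : F) :
    wt3 d a b = ∑ x : F, (univ.filter (IP d a b x)).card := by
  rw [wt3, D3, Finset.filter_filter, ← card_prod_filter (fun x y => IP d a b x y)]
  apply card_filter_congr
  rintro ⟨x, y⟩
  simp only [IP]
  constructor
  · rintro ⟨⟨hx, hA, hB⟩, hC⟩
    refine ⟨hx, hA, hB, ?_⟩
    rw [Tr_add_s18] at hC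
    rw [← zmod_shift1]
    exact hC
  · rintro ⟨hx, hA, hB, hC⟩
    refine ⟨⟨hx, hA, hB⟩, ?_⟩
    rw [Tr_add_s18, zmod_shift1]
    exact hC

lemma card_ne01 {p : F → Prop} {ip : DecidablePred p}
    {ipq : DecidablePred fun x : F => x ≠ 0 ∧ x ≠ 1 ∧ p x} :
    (@filter F (fun x : F => x ≠ 0 ∧ x ≠ 1 ∧ p x) ipq univ).card
      = (((@filter F p ip univ).erase 0).erase 1).card := by
  congr 1
  ext x
  simp only [Finset.mem_erase, Finset.mem_filter, Finset.mem_univ, true_and]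
  tauto

lemma add_cancel_one {a : F} (h : a + 1 = 1) : a = 0 := by
  have h' : a + 1 = 0 + 1 := by rw [h, zero_add]
  exact add_right_cancel h'

lemma wt3_a0 {m : ℕ} (hm : 3 ≤ m) (hF : Fintype.card F = 2 ^ m) (d : ℕ) (b : F) :
    wt3 d 0 b = if b = 0 then 0 else
      if Tr b = 1 then (2 ^ (m - 1) - 1) * 2 ^ (m - 2) else 2 ^ (m - 1) * 2 ^ (m - 2) := by
  rw [wt3_sum]
  have hf : ∀ x : F, (univ.filter (IP d 0 b x)).card
      = if (x ≠ 0 ∧ x ≠ 1 ∧ Tr (b * x) = 1) then 2 ^ (m - 2) else 0 := by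
    intro x
    by_cases hx0 : x = 0
    · subst hx0; rw [inner_x0, if_neg (by simp)]
    · by_cases hx1 : x = 1
      · subst hx1; rw [inner_x1, if_neg (by simp)]
      · rw [inner_a0 hm hF d hx0 hx1]
        by_cases h : Tr (b * x) = 1 <;> simp [hx0, hx1, h]
  rw [Finset.sum_congr rfl (fun x _ => hf x), ← Finset.sum_filter, Finset.sum_const,
    smul_eq_mul, card_ne01 (ip := fun x => ZMod.decidableEq 2 (Tr (b * x)) 1)]
  by_cases hb : b = 0
  · subst hb
    rw [if_pos rfl]
    have : (univ.filter fun x : F => Tr (0 * x) = 1) = ∅ := by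
      apply Finset.filter_false_of_mem
      intro x _
      rw [zero_mul, Tr_zero_s18]
      decide
    rw [this]
    simp
  · rw [if_neg hb]
    have h0 : (0 : F) ∉ (univ.filter fun x : F => Tr (b * x) = 1) := by
      simp only [Finset.mem_filter, mul_zero, Tr_zero_s18, Finset.mem_univ, true_and]
      decide
    rw [Finset.erase_eq_of_notMem h0]
    have hcnt : (univ.filter fun x : F => Tr (b * x) = 1).card = 2 ^ (m - 1) :=
      count1 (by omega) hF hb 1
    by_cases hb1 : Tr b = 1
    · have h1 : (1 : F) ∈ (univ.filter fun x : F => Tr (b * x) = 1) := by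
        simp only [Finset.mem_filter, mul_one, Finset.mem_univ, true_and]
        exact hb1
      rw [if_pos hb1, Finset.card_erase_of_mem h1, hcnt]
    · have h1 : (1 : F) ∉ (univ.filter fun x : F => Tr (b * x) = 1) := by
        simp only [Finset.mem_filter, mul_one, Finset.mem_univ, true_and]
        exact hb1
      rw [if_neg hb1, Finset.erase_eq_of_notMem h1, hcnt]

lemma wt3_a1 {m : ℕ} (hm : 3 ≤ m) (hF : Fintype.card F = 2 ^ m) (d : ℕ) (b : F) :
    wt3 d 1 b = (if b = 0 then 2 ^ m - 2 else
      if Tr b = 0 then 2 ^ (m - 1) - 2 else 2 ^ (m - 1) - 1) * 2 ^ (m - 2) := by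
  rw [wt3_sum]
  have hf : ∀ x : F, (univ.filter (IP d 1 b x)).card
      = if (x ≠ 0 ∧ x ≠ 1 ∧ Tr (b * x) = 0) then 2 ^ (m - 2) else 0 := by
    intro x
    by_cases hx0 : x = 0
    · subst hx0; rw [inner_x0, if_neg (by simp)]
    · by_cases hx1 : x = 1
      · subst hx1; rw [inner_x1, if_neg (by simp)]
      · rw [inner_a1 hm hF d hx0 hx1]
        by_cases h : Tr (b * x) = 0 <;> simp [hx0, hx1, h]
  rw [Finset.sum_congr rfl (fun x _ => hf x), ← Finset.sum_filter, Finset.sum_const,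
    smul_eq_mul, card_ne01 (ip := fun x => ZMod.decidableEq 2 (Tr (b * x)) 0)]
  congr 1
  have h0 : (0 : F) ∈ (univ.filter fun x : F => Tr (b * x) = 0) := by
    simp only [Finset.mem_filter, mul_zero, Tr_zero_s18, Finset.mem_univ, true_and]
  by_cases hb : b = 0
  · subst hb
    rw [if_pos rfl]
    have huniv : (univ.filter fun x : F => Tr (0 * x) = 0) = univ := by
      apply Finset.filter_true_of_mem
      intro x _
      rw [zero_mul, Tr_zero_s18]
    rw [huniv]
    have h1 : (1 : F) ∈ univ.erase (0 : F) := by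
      simp only [Finset.mem_erase, Finset.mem_univ, and_true]
      exact one_ne_zero
    rw [Finset.card_erase_of_mem h1, Finset.card_erase_of_mem (Finset.mem_univ 0),
      Finset.card_univ, hF]
    omega
  · rw [if_neg hb]
    have hcnt : (univ.filter fun x : F => Tr (b * x) = 0).card = 2 ^ (m - 1) :=
      count1 (by omega) hF hb 0
    by_cases hb1 : Tr b = 0
    · have h1 : (1 : F) ∈ ((univ.filter fun x : F => Tr (b * x) = 0).erase 0) := by
        simp only [Finset.mem_erase, Finset.mem_filter, mul_one, Finset.mem_univ, true_and]
        exact ⟨one_ne_zero, hb1⟩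
      rw [if_pos hb1, Finset.card_erase_of_mem h1, Finset.card_erase_of_mem h0, hcnt]
      omega
    · have h1 : (1 : F) ∉ ((univ.filter fun x : F => Tr (b * x) = 0).erase 0) := by
        simp only [Finset.mem_erase, Finset.mem_filter, mul_one, Finset.mem_univ, true_and]
        tauto
      rw [if_neg hb1, Finset.erase_eq_of_notMem h1, Finset.card_erase_of_mem h0, hcnt]

lemma wt3_gen {m : ℕ} (hm : 3 ≤ m) (hF : Fintype.card F = 2 ^ m) (d : ℕ)
    {a : F} (b : F) (ha0 : a ≠ 0) (ha1 : a ≠ 1) :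
    wt3 d a b = (2 ^ m - 4) * 2 ^ (m - 3)
      + ((if Tr (b * a) = 1 then 2 ^ (m - 2) else 0)
      + (if Tr (b * (a + 1)) = 0 then 2 ^ (m - 2) else 0)) := by
  have ha10 : a + 1 ≠ 0 := fun h => ha1 (eq_of_add_eq_zero' h)
  have ha11 : a + 1 ≠ 1 := fun h => ha0 (add_cancel_one h)
  have haa1 : a ≠ a + 1 := fun h => (one_ne_zero : (1:F) ≠ 0) (left_eq_add.mp h)
  have h0m : (0 : F) ∉ ({1, a, a + 1} : Finset F) := by
    simp only [Finset.mem_insert, Finset.mem_singleton]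
    push_neg
    exact ⟨Ne.symm one_ne_zero, Ne.symm ha0, Ne.symm ha10⟩
  have h1m : (1 : F) ∉ ({a, a + 1} : Finset F) := by
    simp only [Finset.mem_insert, Finset.mem_singleton]
    push_neg
    exact ⟨Ne.symm ha1, Ne.symm ha11⟩
  have h2m : a ∉ ({a + 1} : Finset F) := by
    simp only [Finset.mem_singleton]
    exact haa1
  have hsub : ({0, 1, a, a + 1} : Finset F) ⊆ univ := Finset.subset_univ _
  rw [wt3_sum, ← Finset.sum_sdiff hsub]
  have hgen : ∀ x ∈ univ \ ({0, 1, a, a + 1} : Finset F),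
      (univ.filter (IP d a b x)).card = 2 ^ (m - 3) := by
    intro x hx
    simp only [Finset.mem_sdiff, Finset.mem_univ, true_and, Finset.mem_insert,
      Finset.mem_singleton] at hx
    push_neg at hx
    obtain ⟨hx0, hx1, hxa, hxa1⟩ := hx
    exact inner_generic hm hF d hx0 hx1 ha0 ha1 (Ne.symm hxa)
      (fun h => hxa1 (by rw [h, add_assoc, add_self', add_zero]))
  rw [Finset.sum_congr rfl hgen, Finset.sum_const, smul_eq_mul]
  have hcard : (univ \ ({0, 1, a, a + 1} : Finset F)).card = 2 ^ m - 4 := by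
    rw [Finset.card_sdiff_of_subset hsub, Finset.card_univ, hF]
    congr 1
    rw [Finset.card_insert_of_notMem h0m, Finset.card_insert_of_notMem h1m,
      Finset.card_insert_of_notMem h2m, Finset.card_singleton]
  rw [hcard]
  rw [Finset.sum_insert h0m, Finset.sum_insert h1m, Finset.sum_insert h2m,
    Finset.sum_singleton]
  rw [inner_x0, inner_x1, inner_xa hm hF d ha0 ha1, inner_xa1 hm hF d ha0 ha1]
  omega

section Arith

lemma ar_pow {m : ℕ} (hm : 3 ≤ m) : ∃ K : ℕ, 1 ≤ K ∧ 2^(m-1) = K*4 ∧ 2^(m-2) = K*2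
    ∧ 2^(m-3) = K ∧ 2^m = K*8 ∧ 2^(2*m-3) = K*K*8 ∧ 2^(2*m-2) = K*K*16
    ∧ 2^(2*m-1) = K*K*32 := by
  refine ⟨2^(m-3), Nat.one_le_two_pow, ?_, ?_, rfl, ?_, ?_, ?_, ?_⟩
  · rw [show m-1 = (m-3)+2 from by omega, pow_add]; norm_num
  · rw [show m-2 = (m-3)+1 from by omega, pow_add]; norm_num
  · rw [show m = (m-3)+3 from by omega, pow_add]; norm_num
  · rw [show 2*m-3 = (m-3)+((m-3)+3) from by omega, pow_add, pow_add]; ring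
  · rw [show 2*m-2 = (m-3)+((m-3)+4) from by omega, pow_add, pow_add]; ring
  · rw [show 2*m-1 = (m-3)+((m-3)+5) from by omega, pow_add, pow_add]; ring

lemma ar3 {m : ℕ} (hm : 3 ≤ m) : (2^m-2)*2^(m-2) = 2^(m-1)*(2^(m-1)-1) := by
  obtain ⟨K, hK, e1, e2, e3, e4, e5, e6, e7⟩ := ar_pow hm
  rw [e1, e2, e4]
  zify [show 2 ≤ K*8 from by omega, show 1 ≤ K*4 from by omega]
  ring

lemma ar4 {m : ℕ} (hm : 3 ≤ m) : (2^(m-1)-2)*2^(m-2) = 2^(m-1)*(2^(m-2)-1) := by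
  obtain ⟨K, hK, e1, e2, e3, e4, e5, e6, e7⟩ := ar_pow hm
  rw [e1, e2]
  zify [show 2 ≤ K*4 from by omega, show 1 ≤ K*2 from by omega]
  ring

lemma ar2 {m : ℕ} (hm : 3 ≤ m) : 2^(m-1)*2^(m-2) = 2^(2*m-3) := by
  rw [← pow_add]
  congr 1
  omega

lemma ar5 {m : ℕ} (hm : 3 ≤ m) :
    (2^m-4)*2^(m-3) + (2^(m-2) + 2^(m-2)) = 2^(2*m-3) := by
  obtain ⟨K, hK, e1, e2, e3, e4, e5, e6, e7⟩ := ar_pow hm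
  rw [e2, e3, e4, e5]
  zify [show 4 ≤ K*8 from by omega]
  ring

lemma ar6 {m : ℕ} (hm : 3 ≤ m) :
    (2^m-4)*2^(m-3) + 2^(m-2) = 2^(m-2)*(2^(m-1)-1) := by
  obtain ⟨K, hK, e1, e2, e3, e4, e5, e6, e7⟩ := ar_pow hm
  rw [e1, e2, e3, e4]
  zify [show 4 ≤ K*8 from by omega, show 1 ≤ K*4 from by omega]
  ring

lemma ar7 {m : ℕ} (hm : 3 ≤ m) :
    (2^m-4)*2^(m-3) = 2^(m-1)*(2^(m-2)-1) := by
  obtain ⟨K, hK, e1, e2, e3, e4, e5, e6, e7⟩ := ar_pow hm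
  rw [e1, e2, e3, e4]
  zify [show 4 ≤ K*8 from by omega, show 1 ≤ K*2 from by omega]
  ring

lemma arlt {m : ℕ} (hm : 3 ≤ m) :
    0 < 2^(m-1)*(2^(m-2)-1) ∧ 2^(m-1)*(2^(m-2)-1) < 2^(m-2)*(2^(m-1)-1)
    ∧ 2^(m-2)*(2^(m-1)-1) < 2^(2*m-3) ∧ 2^(2*m-3) < 2^(m-1)*(2^(m-1)-1) := by
  obtain ⟨K, hK, e1, e2, e3, e4, e5, e6, e7⟩ := ar_pow hm
  rw [e1, e2, e5]
  have h1 : 1 ≤ K*2 := by omega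
  have h2 : 1 ≤ K*4 := by omega
  refine ⟨?_, ?_, ?_, ?_⟩ <;>
  · zify [h1, h2]
    nlinarith [hK, sq_nonneg (K : ℤ)]

end Arith

lemma wt_cases {m : ℕ} (hm : 3 ≤ m) (hF : Fintype.card F = 2 ^ m) (d : ℕ) (a b : F) :
    wt3 d a b =
      if a = 0 then (if b = 0 then 0 else if Tr b = 1 then 2^(m-2)*(2^(m-1)-1)
        else 2^(2*m-3))
      else if a = 1 then (if b = 0 then 2^(m-1)*(2^(m-1)-1)
        else if Tr b = 1 then 2^(m-2)*(2^(m-1)-1) else 2^(m-1)*(2^(m-2)-1))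
      else (if Tr b = 1 then (if Tr (a*b) = 1 then 2^(2*m-3)
        else 2^(m-1)*(2^(m-2)-1)) else 2^(m-2)*(2^(m-1)-1)) := by
  by_cases ha0 : a = 0
  · subst ha0
    rw [wt3_a0 hm hF d b, if_pos rfl]
    by_cases hb : b = 0
    · rw [if_pos hb, if_pos hb]
    · rw [if_neg hb, if_neg hb]
      by_cases hb1 : Tr b = 1
      · rw [if_pos hb1, if_pos hb1, mul_comm]
      · rw [if_neg hb1, if_neg hb1, ar2 hm]
  · rw [if_neg ha0]
    by_cases ha1 : a = 1
    · subst ha1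
      rw [wt3_a1 hm hF d b, if_pos rfl]
      by_cases hb : b = 0
      · rw [if_pos hb, if_pos hb, ar3 hm]
      · rw [if_neg hb, if_neg hb]
        by_cases hb1 : Tr b = 1
        · rw [if_pos hb1, if_neg (by rw [hb1]; decide), mul_comm]
        · rw [if_neg hb1, if_pos (zmod_not_one hb1), ar4 hm]
    · rw [if_neg ha1, wt3_gen hm hF d b ha0 ha1]
      have hcomm : Tr (b*a) = Tr (a*b) := by rw [mul_comm]
      have hsplit : Tr (b*(a+1)) = Tr (a*b) + Tr b := by
        rw [mul_add, mul_one, Tr_add_s18, mul_comm]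
      rw [hcomm, hsplit]
      rcases hall (Tr (a*b)) with h1 | h1 <;> rcases hall (Tr b) with h2 | h2 <;>
        rw [h1, h2]
      · rw [if_neg (by decide), if_pos (by decide), if_neg (by decide), zero_add]
        exact ar6 hm
      · rw [if_neg (by decide), if_neg (by decide), if_pos (by decide),
          if_neg (by decide), zero_add, add_zero]
        exact ar7 hm
      · rw [if_pos rfl, if_neg (by decide), if_neg (by decide), add_zero]
        exact ar6 hm
      · rw [if_pos rfl, if_pos (by decide), if_pos (by decide), if_pos (by decide)]
        exact ar5 hm

lemma cb {m : ℕ} (hm : 3 ≤ m) (hF : Fintype.card F = 2 ^ m) (ε : ZMod 2) :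
    (univ.filter fun b : F => Tr b = ε).card = 2^(m-1) :=
  (card_filter_congr (fun b => by rw [one_mul])).trans
    (count1 (by omega) hF one_ne_zero ε)

lemma cbne {m : ℕ} (hm : 3 ≤ m) (hF : Fintype.card F = 2 ^ m) :
    (univ.filter fun b : F => b ≠ 0 ∧ Tr b = 0).card = 2^(m-1) - 1 := by
  have h : (univ.filter fun b : F => b ≠ 0 ∧ Tr b = 0)
      = (univ.filter fun b : F => Tr b = 0).erase 0 := by
    ext b
    simp only [Finset.mem_erase, Finset.mem_filter, Finset.mem_univ, true_and]
  rw [h, Finset.card_erase_of_mem (by simp [Tr_zero_s18]), cb hm hF 0]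

lemma cb2 {m : ℕ} (hm : 3 ≤ m) (hF : Fintype.card F = 2 ^ m) {a : F}
    (ha0 : a ≠ 0) (ha1 : a ≠ 1) (σ : ZMod 2) :
    (univ.filter fun b : F => Tr b = 1 ∧ Tr (a*b) = σ).card = 2^(m-2) :=
  (card_filter_congr (fun b => by rw [one_mul])).trans
    (count2 (by omega) hF one_ne_zero ha0 (Ne.symm ha1) 1 σ)

section Freq

variable {m : ℕ}

lemma g0w1 (hm : 3 ≤ m) (hF : Fintype.card F = 2 ^ m) (d : ℕ) :
    (univ.filter fun b : F => wt3 d 0 b = 2^(m-1)*(2^(m-2)-1)).card = 0 := by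
  obtain ⟨l0, l1, l2, l3⟩ := arlt hm
  apply card_filter_false
  intro b hcon
  rw [wt_cases hm hF d 0 b, if_pos rfl] at hcon
  by_cases hb : b = 0
  · rw [if_pos hb] at hcon; omega
  · rw [if_neg hb] at hcon
    by_cases hb1 : Tr b = 1
    · rw [if_pos hb1] at hcon; omega
    · rw [if_neg hb1] at hcon; omega

lemma g0w2 (hm : 3 ≤ m) (hF : Fintype.card F = 2 ^ m) (d : ℕ) :
    (univ.filter fun b : F => wt3 d 0 b = 2^(m-2)*(2^(m-1)-1)).card = 2^(m-1) := by
  obtain ⟨l0, l1, l2, l3⟩ := arlt hm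
  refine (card_filter_congr (q := fun b : F => Tr b = 1) ?_).trans (cb hm hF 1)
  intro b
  rw [wt_cases hm hF d 0 b, if_pos rfl]
  constructor
  · intro hcon
    by_cases hb : b = 0
    · rw [if_pos hb] at hcon; omega
    · rw [if_neg hb] at hcon
      by_cases hb1 : Tr b = 1
      · exact hb1
      · rw [if_neg hb1] at hcon; omega
  · intro h
    have hb : b ≠ 0 := fun h0 => by rw [h0, Tr_zero_s18] at h; exact absurd h (by decide)
    rw [if_neg hb, if_pos h]

lemma g0w3 (hm : 3 ≤ m) (hF : Fintype.card F = 2 ^ m) (d : ℕ) :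
    (univ.filter fun b : F => wt3 d 0 b = 2^(2*m-3)).card = 2^(m-1) - 1 := by
  obtain ⟨l0, l1, l2, l3⟩ := arlt hm
  refine (card_filter_congr (q := fun b : F => b ≠ 0 ∧ Tr b = 0) ?_).trans (cbne hm hF)
  intro b
  rw [wt_cases hm hF d 0 b, if_pos rfl]
  constructor
  · intro hcon
    by_cases hb : b = 0
    · rw [if_pos hb] at hcon; omega
    · rw [if_neg hb] at hcon
      by_cases hb1 : Tr b = 1
      · rw [if_pos hb1] at hcon; omega
      · exact ⟨hb, zmod_not_one hb1⟩
  · rintro ⟨hb, h0⟩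
    rw [if_neg hb, if_neg (by rw [h0]; decide)]

lemma g0w4 (hm : 3 ≤ m) (hF : Fintype.card F = 2 ^ m) (d : ℕ) :
    (univ.filter fun b : F => wt3 d 0 b = 2^(m-1)*(2^(m-1)-1)).card = 0 := by
  obtain ⟨l0, l1, l2, l3⟩ := arlt hm
  apply card_filter_false
  intro b hcon
  rw [wt_cases hm hF d 0 b, if_pos rfl] at hcon
  by_cases hb : b = 0
  · rw [if_pos hb] at hcon; omega
  · rw [if_neg hb] at hcon
    by_cases hb1 : Tr b = 1
    · rw [if_pos hb1] at hcon; omega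
    · rw [if_neg hb1] at hcon; omega

lemma g1w1 (hm : 3 ≤ m) (hF : Fintype.card F = 2 ^ m) (d : ℕ) :
    (univ.filter fun b : F => wt3 d 1 b = 2^(m-1)*(2^(m-2)-1)).card = 2^(m-1) - 1 := by
  obtain ⟨l0, l1, l2, l3⟩ := arlt hm
  refine (card_filter_congr (q := fun b : F => b ≠ 0 ∧ Tr b = 0) ?_).trans (cbne hm hF)
  intro b
  rw [wt_cases hm hF d 1 b, if_neg (one_ne_zero), if_pos rfl]
  constructor
  · intro hcon
    by_cases hb : b = 0
    · rw [if_pos hb] at hcon; omega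
    · rw [if_neg hb] at hcon
      by_cases hb1 : Tr b = 1
      · rw [if_pos hb1] at hcon; omega
      · exact ⟨hb, zmod_not_one hb1⟩
  · rintro ⟨hb, h0⟩
    rw [if_neg hb, if_neg (by rw [h0]; decide)]

lemma g1w2 (hm : 3 ≤ m) (hF : Fintype.card F = 2 ^ m) (d : ℕ) :
    (univ.filter fun b : F => wt3 d 1 b = 2^(m-2)*(2^(m-1)-1)).card = 2^(m-1) := by
  obtain ⟨l0, l1, l2, l3⟩ := arlt hm
  refine (card_filter_congr (q := fun b : F => Tr b = 1) ?_).trans (cb hm hF 1)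
  intro b
  rw [wt_cases hm hF d 1 b, if_neg (one_ne_zero), if_pos rfl]
  constructor
  · intro hcon
    by_cases hb : b = 0
    · rw [if_pos hb] at hcon; omega
    · rw [if_neg hb] at hcon
      by_cases hb1 : Tr b = 1
      · exact hb1
      · rw [if_neg hb1] at hcon; omega
  · intro h
    have hb : b ≠ 0 := fun h0 => by rw [h0, Tr_zero_s18] at h; exact absurd h (by decide)
    rw [if_neg hb, if_pos h]

lemma g1w3 (hm : 3 ≤ m) (hF : Fintype.card F = 2 ^ m) (d : ℕ) :
    (univ.filter fun b : F => wt3 d 1 b = 2^(2*m-3)).card = 0 := by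
  obtain ⟨l0, l1, l2, l3⟩ := arlt hm
  apply card_filter_false
  intro b hcon
  rw [wt_cases hm hF d 1 b, if_neg (one_ne_zero), if_pos rfl] at hcon
  by_cases hb : b = 0
  · rw [if_pos hb] at hcon; omega
  · rw [if_neg hb] at hcon
    by_cases hb1 : Tr b = 1
    · rw [if_pos hb1] at hcon; omega
    · rw [if_neg hb1] at hcon; omega

lemma g1w4 (hm : 3 ≤ m) (hF : Fintype.card F = 2 ^ m) (d : ℕ) :
    (univ.filter fun b : F => wt3 d 1 b = 2^(m-1)*(2^(m-1)-1)).card = 1 := by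
  obtain ⟨l0, l1, l2, l3⟩ := arlt hm
  have h : (univ.filter fun b : F => wt3 d 1 b = 2^(m-1)*(2^(m-1)-1))
      = ({0} : Finset F) := by
    ext b
    simp only [Finset.mem_filter, Finset.mem_univ, true_and, Finset.mem_singleton]
    rw [wt_cases hm hF d 1 b, if_neg (one_ne_zero), if_pos rfl]
    constructor
    · intro hcon
      by_cases hb : b = 0
      · exact hb
      · rw [if_neg hb] at hcon
        by_cases hb1 : Tr b = 1
        · rw [if_pos hb1] at hcon; omega
        · rw [if_neg hb1] at hcon; omega
    · intro h; rw [if_pos h]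
  rw [h, Finset.card_singleton]

lemma gaw1 (hm : 3 ≤ m) (hF : Fintype.card F = 2 ^ m) (d : ℕ) {a : F}
    (ha0 : a ≠ 0) (ha1 : a ≠ 1) :
    (univ.filter fun b : F => wt3 d a b = 2^(m-1)*(2^(m-2)-1)).card = 2^(m-2) := by
  obtain ⟨l0, l1, l2, l3⟩ := arlt hm
  refine (card_filter_congr (q := fun b : F => Tr b = 1 ∧ Tr (a*b) = 0) ?_).trans
    (cb2 hm hF ha0 ha1 0)
  intro b
  rw [wt_cases hm hF d a b, if_neg ha0, if_neg ha1]
  constructor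
  · intro hcon
    by_cases hb1 : Tr b = 1
    · rw [if_pos hb1] at hcon
      by_cases hab : Tr (a*b) = 1
      · rw [if_pos hab] at hcon; omega
      · exact ⟨hb1, zmod_not_one hab⟩
    · rw [if_neg hb1] at hcon; omega
  · rintro ⟨h1, h2⟩
    rw [if_pos h1, if_neg (by rw [h2]; decide)]

lemma gaw2 (hm : 3 ≤ m) (hF : Fintype.card F = 2 ^ m) (d : ℕ) {a : F}
    (ha0 : a ≠ 0) (ha1 : a ≠ 1) :
    (univ.filter fun b : F => wt3 d a b = 2^(m-2)*(2^(m-1)-1)).card = 2^(m-1) := by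
  obtain ⟨l0, l1, l2, l3⟩ := arlt hm
  refine (card_filter_congr (q := fun b : F => Tr b = 0) ?_).trans (cb hm hF 0)
  intro b
  rw [wt_cases hm hF d a b, if_neg ha0, if_neg ha1]
  constructor
  · intro hcon
    by_cases hb1 : Tr b = 1
    · rw [if_pos hb1] at hcon
      by_cases hab : Tr (a*b) = 1
      · rw [if_pos hab] at hcon; omega
      · rw [if_neg hab] at hcon; omega
    · exact zmod_not_one hb1
  · intro h
    rw [if_neg (by rw [h]; decide)]

lemma gaw3 (hm : 3 ≤ m) (hF : Fintype.card F = 2 ^ m) (d : ℕ) {a : F}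
    (ha0 : a ≠ 0) (ha1 : a ≠ 1) :
    (univ.filter fun b : F => wt3 d a b = 2^(2*m-3)).card = 2^(m-2) := by
  obtain ⟨l0, l1, l2, l3⟩ := arlt hm
  refine (card_filter_congr (q := fun b : F => Tr b = 1 ∧ Tr (a*b) = 1) ?_).trans
    (cb2 hm hF ha0 ha1 1)
  intro b
  rw [wt_cases hm hF d a b, if_neg ha0, if_neg ha1]
  constructor
  · intro hcon
    by_cases hb1 : Tr b = 1
    · rw [if_pos hb1] at hcon
      by_cases hab : Tr (a*b) = 1
      · exact ⟨hb1, hab⟩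
      · rw [if_neg hab] at hcon; omega
    · rw [if_neg hb1] at hcon; omega
  · rintro ⟨h1, h2⟩
    rw [if_pos h1, if_pos h2]

lemma gaw4 (hm : 3 ≤ m) (hF : Fintype.card F = 2 ^ m) (d : ℕ) {a : F}
    (ha0 : a ≠ 0) (ha1 : a ≠ 1) :
    (univ.filter fun b : F => wt3 d a b = 2^(m-1)*(2^(m-1)-1)).card = 0 := by
  obtain ⟨l0, l1, l2, l3⟩ := arlt hm
  apply card_filter_false
  intro b hcon
  rw [wt_cases hm hF d a b, if_neg ha0, if_neg ha1] at hcon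
  by_cases hb1 : Tr b = 1
  · rw [if_pos hb1] at hcon
    by_cases hab : Tr (a*b) = 1
    · rw [if_pos hab] at hcon; omega
    · rw [if_neg hab] at hcon; omega
  · rw [if_neg hb1] at hcon; omega

end Freq

lemma arf1 {m : ℕ} (hm : 3 ≤ m) :
    (2^m-2)*2^(m-2) + (2^(m-1)-1) = 2^(2*m-2)-1 := by
  obtain ⟨K, hK, e1, e2, e3, e4, e5, e6, e7⟩ := ar_pow hm
  rw [e1, e2, e4, e6]
  zify [show 2 ≤ K*8 from by omega, show 1 ≤ K*4 from by omega,
    show 1 ≤ K*K*16 from by nlinarith]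
  ring

lemma arf2 {m : ℕ} (hm : 3 ≤ m) :
    (2^m-2)*2^(m-1) + (2^(m-1) + 2^(m-1)) = 2^(2*m-1) := by
  obtain ⟨K, hK, e1, e2, e3, e4, e5, e6, e7⟩ := ar_pow hm
  rw [e1, e4, e7]
  zify [show 2 ≤ K*8 from by omega]
  ring

theorem stmt18 (m d : ℕ) (hm : 3 ≤ m) (hd : 1 ≤ d) (hF : Fintype.card F = 2 ^ m) :
    -- length
    (D3 F d).card = 2 ^ (m - 1) * (2 ^ (m - 1) - 1) ∧
    -- dimension 2m
    Function.Injective (fun ab : F × F => fun q : (D3 F d) =>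
      Tr (ab.1 * q.1.1 ^ d * q.1.2 + ab.2 * q.1.1)) ∧
    -- minimum distance
    (∀ a b : F, (a, b) ≠ (0, 0) → 2 ^ (m - 1) * (2 ^ (m - 2) - 1) ≤ wt3 d a b) ∧
    -- weight distribution
    (univ.filter fun ab : F × F => wt3 d ab.1 ab.2 = 2 ^ (m - 1) * (2 ^ (m - 2) - 1)).card
      = 2 ^ (2 * m - 2) - 1 ∧
    (univ.filter fun ab : F × F => wt3 d ab.1 ab.2 = 2 ^ (m - 2) * (2 ^ (m - 1) - 1)).card
      = 2 ^ (2 * m - 1) ∧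
    (univ.filter fun ab : F × F => wt3 d ab.1 ab.2 = 2 ^ (2 * m - 3)).card
      = 2 ^ (2 * m - 2) - 1 ∧
    (univ.filter fun ab : F × F => wt3 d ab.1 ab.2 = 2 ^ (m - 1) * (2 ^ (m - 1) - 1)).card
      = 1 := by
  obtain ⟨l0, l1, l2, l3⟩ := arlt (m := m) hm
  -- minimum distance
  have hmin : ∀ a b : F, (a, b) ≠ (0, 0) → 2^(m-1)*(2^(m-2)-1) ≤ wt3 d a b := by
    intro a b hab
    rw [wt_cases hm hF d a b]
    by_cases ha0 : a = 0
    · rw [if_pos ha0]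
      have hb : b ≠ 0 := fun h => hab (by rw [ha0, h])
      rw [if_neg hb]
      by_cases hb1 : Tr b = 1
      · rw [if_pos hb1]; omega
      · rw [if_neg hb1]; omega
    · rw [if_neg ha0]
      by_cases ha1 : a = 1
      · rw [if_pos ha1]
        by_cases hb : b = 0
        · rw [if_pos hb]; omega
        · rw [if_neg hb]
          by_cases hb1 : Tr b = 1
          · rw [if_pos hb1]; omega
          · rw [if_neg hb1]
      · rw [if_neg ha1]
        by_cases hb1 : Tr b = 1
        · rw [if_pos hb1]
          by_cases hab1 : Tr (a*b) = 1
          · rw [if_pos hab1]; omega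
          · rw [if_neg hab1]
        · rw [if_neg hb1]; omega
  -- frequency skeleton
  have freq : ∀ (W g0 g1 ga : ℕ),
      (univ.filter fun b : F => wt3 d 0 b = W).card = g0 →
      (univ.filter fun b : F => wt3 d 1 b = W).card = g1 →
      (∀ a : F, a ≠ 0 → a ≠ 1 → (univ.filter fun b : F => wt3 d a b = W).card = ga) →
      (univ.filter fun ab : F × F => wt3 d ab.1 ab.2 = W).card
        = (2^m - 2) * ga + (g0 + g1) := by
    intro W g0 g1 ga h0 h1 hga
    have hh := (card_filter_congr (ip := fun q : F × F => Classical.propDecidable _)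
      (fun q : F × F => Iff.rfl)).trans
      (card_prod_filter (fun a b => wt3 d a b = W))
    have hh' : (univ.filter fun ab : F × F => wt3 d ab.1 ab.2 = W).card
        = ∑ x : F, (univ.filter fun y : F => wt3 d x y = W).card :=
      ((card_filter_congr (fun q : F × F => Iff.rfl)).trans hh).trans
        (Finset.sum_congr rfl (fun x _ => card_filter_congr (fun y => Iff.rfl)))
    rw [hh']
    have hsub : ({0, 1} : Finset F) ⊆ univ := Finset.subset_univ _
    rw [← Finset.sum_sdiff hsub]
    have hgen : ∀ a ∈ univ \ ({0, 1} : Finset F),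
        (univ.filter fun b : F => wt3 d a b = W).card = ga := by
      intro a ha
      simp only [Finset.mem_sdiff, Finset.mem_univ, true_and, Finset.mem_insert,
        Finset.mem_singleton] at ha
      push_neg at ha
      exact hga a ha.1 ha.2
    rw [Finset.sum_congr rfl hgen, Finset.sum_const, smul_eq_mul]
    have hcard : (univ \ ({0, 1} : Finset F)).card = 2^m - 2 := by
      rw [Finset.card_sdiff_of_subset hsub, Finset.card_univ, hF]
      congr 1
      rw [Finset.card_insert_of_notMem (by simp), Finset.card_singleton]
    rw [hcard, Finset.sum_insert (by simp), Finset.sum_singleton, h0, h1]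
  refine ⟨?_, ?_, hmin, ?_, ?_, ?_, ?_⟩
  · -- length
    have h : (D3 F d).filter (fun q => Tr (1 * q.1 ^ d * q.2 + 0 * q.1) = 1) = D3 F d := by
      apply Finset.filter_true_of_mem
      intro q hq
      rw [D3, Finset.mem_filter] at hq
      rw [one_mul, zero_mul, add_zero]
      exact hq.2.2.2
    have h2 : wt3 d (1 : F) 0 = (D3 F d).card := by rw [wt3, h]
    rw [← h2, wt3_a1 hm hF d 0, if_pos rfl, ar3 hm]
  · -- injectivity
    rintro ⟨a1, b1⟩ ⟨a2, b2⟩ h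
    have hz : wt3 d (a1 + a2) (b1 + b2) = 0 := by
      rw [wt3]
      rw [Finset.card_eq_zero]
      apply Finset.filter_false_of_mem
      intro q hq hcon
      have hfun := congrFun h (⟨q, hq⟩ : (D3 F d : Finset (F × F)))
      simp only at hfun
      have hsplit : (a1 + a2) * q.1 ^ d * q.2 + (b1 + b2) * q.1
          = (a1 * q.1 ^ d * q.2 + b1 * q.1) + (a2 * q.1 ^ d * q.2 + b2 * q.1) := by ring
      rw [hsplit, Tr_add_s18, hfun, zmod_addself] at hcon
      exact absurd hcon (by decide)
    by_contra hne
    have hne2 : (a1 + a2, b1 + b2) ≠ ((0 : F), (0 : F)) := by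
      intro h'
      rw [Prod.mk.injEq] at h'
      exact hne (by rw [Prod.mk.injEq]
                    exact ⟨eq_of_add_eq_zero' h'.1, eq_of_add_eq_zero' h'.2⟩)
    have := hmin _ _ hne2
    rw [hz] at this
    omega
  · -- W1 frequency
    rw [freq _ _ _ _ (g0w1 hm hF d) (g1w1 hm hF d) (fun a ha0 ha1 => gaw1 hm hF d ha0 ha1)]
    rw [zero_add]
    exact arf1 hm
  · -- W2
    rw [freq _ _ _ _ (g0w2 hm hF d) (g1w2 hm hF d) (fun a ha0 ha1 => gaw2 hm hF d ha0 ha1)]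
    exact arf2 hm
  · -- W3
    rw [freq _ _ _ _ (g0w3 hm hF d) (g1w3 hm hF d) (fun a ha0 ha1 => gaw3 hm hF d ha0 ha1)]
    rw [add_zero]
    exact arf1 hm
  · -- W4
    rw [freq _ _ _ _ (g0w4 hm hF d) (g1w4 hm hF d) (fun a ha0 ha1 => gaw4 hm hF d ha0 ha1)]
    rw [mul_zero, zero_add, zero_add]
end
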